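/- arXiv:2511.11047 — 3 statements merged into one kernel-verified Lean document; each statement's English description precedes it below -/
import Mathlib

section
/- Let n, m ≥ 2 be integers and let G be the wreath product (Fin m → ZMod n) ⋊ Perm(Fin m), with Perm(Fin m) acting by permuting coordinates. Then the number of conjugacy classes of G equals ∑ p(l_1)·p(l_2)·…·p(l_n), where the sum runs over all n-tuples (l_1,…,l_n) of natural numbers with l_1 + … + l_n = m, and p(l) denotes the number of partitions of l. -/
/-- The underlying (multiplicative) group `Z_n^m = (Fin m → ZMod n)`. -/
abbrev BaseGrp (n m : ℕ) := Multiplicative (Fin m → ZMod n)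

/-- The action of `Perm (Fin m)` on `Fin m → ZMod n` permuting coordinates:
`(σ • a)(j) = a (σ⁻¹ j)`, as a homomorphism to the automorphism group. -/
def permAut (n m : ℕ) : Equiv.Perm (Fin m) →* MulAut (BaseGrp n m) where
  toFun σ :=
    { toFun := fun a => Multiplicative.ofAdd fun j => Multiplicative.toAdd a (σ⁻¹ j)
      invFun := fun a => Multiplicative.ofAdd fun j => Multiplicative.toAdd a (σ j)
      left_inv := fun a => by
        show Multiplicative.ofAdd (fun j => Multiplicative.toAdd a (σ⁻¹ (σ j))) = a
        simp
      right_inv := fun a => by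
        show Multiplicative.ofAdd (fun j => Multiplicative.toAdd a (σ (σ⁻¹ j))) = a
        simp
      map_mul' := fun a b => rfl }
  map_one' := by
    apply MulEquiv.ext; intro a
    show Multiplicative.ofAdd (fun j => Multiplicative.toAdd a ((1 : Equiv.Perm (Fin m))⁻¹ j)) = a
    simp
  map_mul' := fun σ τ => by
    apply MulEquiv.ext; intro a
    show Multiplicative.ofAdd (fun j => Multiplicative.toAdd a ((σ * τ)⁻¹ j)) = _
    rfl

/-- The wreath product `Z_n ≀ S_m = (Fin m → ZMod n) ⋊ Perm (Fin m)`. -/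
abbrev WreathProd (n m : ℕ) := SemidirectProduct (BaseGrp n m) (Equiv.Perm (Fin m)) (permAut n m)

open Equiv Equiv.Perm Finset

namespace WP

variable {n m : ℕ}

/-- Build a wreath product element from an additive function and a permutation. -/
def mk' (a : Fin m → ZMod n) (σ : Equiv.Perm (Fin m)) : WreathProd n m :=
  ⟨Multiplicative.ofAdd a, σ⟩

lemma mk'_surj (x : WreathProd n m) : ∃ a σ, x = mk' a σ :=
  ⟨Multiplicative.toAdd x.left, x.right, rfl⟩

lemma mk'_mul (a b : Fin m → ZMod n) (σ τ : Equiv.Perm (Fin m)) :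
    mk' a σ * mk' b τ = mk' (a + fun j => b (σ⁻¹ j)) (σ * τ) := rfl

lemma mk'_inv (a : Fin m → ZMod n) (σ : Equiv.Perm (Fin m)) :
    (mk' a σ)⁻¹ = mk' (fun j => -a (σ j)) σ⁻¹ := rfl

lemma conj_base (b a : Fin m → ZMod n) (σ : Equiv.Perm (Fin m)) :
    mk' b 1 * mk' a σ * (mk' b 1)⁻¹
      = mk' (fun j => b j + a j - b (σ⁻¹ j)) σ := by
  rw [mk'_inv, mk'_mul, mk'_mul]
  congr 1
  · funext j
    simp [inv_one]
    ring

lemma conj_perm (a : Fin m → ZMod n) (σ τ : Equiv.Perm (Fin m)) :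
    mk' 0 τ * mk' a σ * (mk' 0 τ)⁻¹
      = mk' (fun j => a (τ⁻¹ j)) (τ * σ * τ⁻¹) := by
  rw [mk'_inv, mk'_mul, mk'_mul]
  congr 1
  funext j
  simp

lemma mk'_decomp (a : Fin m → ZMod n) (σ : Equiv.Perm (Fin m)) :
    mk' a σ = mk' a 1 * mk' 0 σ := by
  rw [mk'_mul]; congr 1
  funext j; simp


section Orb

def orb (σ : Perm (Fin m)) (j : Fin m) : Finset (Fin m) :=
  Finset.univ.filter (σ.SameCycle j ·)

lemma mem_orb {σ : Perm (Fin m)} {j k : Fin m} : k ∈ orb σ j ↔ σ.SameCycle j k := by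
  simp [orb]

lemma self_mem_orb (σ : Perm (Fin m)) (j : Fin m) : j ∈ orb σ j := mem_orb.2 SameCycle.rfl

lemma orb_eq_of_sameCycle {σ : Perm (Fin m)} {j k : Fin m} (h : σ.SameCycle j k) :
    orb σ k = orb σ j :=
  Finset.ext fun x => by simp only [mem_orb]; exact ⟨h.trans, (h.symm).trans⟩

def orbs (σ : Perm (Fin m)) : Finset (Finset (Fin m)) := Finset.univ.image (orb σ)

lemma orb_mem_orbs (σ : Perm (Fin m)) (j : Fin m) : orb σ j ∈ orbs σ :=
  Finset.mem_image_of_mem _ (Finset.mem_univ j)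

lemma mem_orbs {σ : Perm (Fin m)} {O : Finset (Fin m)} :
    O ∈ orbs σ ↔ ∃ j, O = orb σ j := by
  simp [orbs, eq_comm]

lemma orb_eq_of_mem {σ : Perm (Fin m)} {O : Finset (Fin m)} (hO : O ∈ orbs σ) {k : Fin m}
    (hk : k ∈ O) : orb σ k = O := by
  obtain ⟨j, rfl⟩ := mem_orbs.1 hO
  exact orb_eq_of_sameCycle (mem_orb.1 hk)

lemma inv_mem_orb {σ : Perm (Fin m)} {O : Finset (Fin m)} (hO : O ∈ orbs σ) {k : Fin m}
    (hk : k ∈ O) : σ⁻¹ k ∈ O := by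
  obtain ⟨j, rfl⟩ := mem_orbs.1 hO
  exact mem_orb.2 (SameCycle.symm_apply_right (mem_orb.1 hk))

def dat (a : Fin m → ZMod n) (O : Finset (Fin m)) : ℕ × ZMod n := (O.card, ∑ k ∈ O, a k)

def inva (a : Fin m → ZMod n) (σ : Perm (Fin m)) : Multiset (ℕ × ZMod n) :=
  (orbs σ).val.map (dat a)

def Φ (x : WreathProd n m) : Multiset (ℕ × ZMod n) :=
  inva (Multiplicative.toAdd x.left) x.right

lemma Φ_mk' (a : Fin m → ZMod n) (σ : Perm (Fin m)) : Φ (mk' a σ) = inva a σ := rfl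

lemma orb_conj (σ τ : Perm (Fin m)) (k : Fin m) :
    orb (τ * σ * τ⁻¹) k = (orb σ (τ⁻¹ k)).image τ := by
  ext x
  simp only [mem_orb, Finset.mem_image, sameCycle_conj]
  constructor
  · intro h; exact ⟨τ⁻¹ x, h, by simp⟩
  · rintro ⟨y, hy, rfl⟩; simpa using hy

lemma orbs_conj (σ τ : Perm (Fin m)) :
    orbs (τ * σ * τ⁻¹) = (orbs σ).image (Finset.image τ) := by
  ext O
  simp only [mem_orbs, Finset.mem_image]
  constructor
  · rintro ⟨k, rfl⟩; exact ⟨orb σ (τ⁻¹ k), ⟨τ⁻¹ k, rfl⟩, (orb_conj σ τ k).symm⟩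
  · rintro ⟨O', ⟨j, rfl⟩, rfl⟩
    exact ⟨τ j, by rw [orb_conj]; simp⟩

lemma inva_conj_perm (a : Fin m → ZMod n) (σ τ : Perm (Fin m)) :
    inva (fun j => a (τ⁻¹ j)) (τ * σ * τ⁻¹) = inva a σ := by
  unfold inva
  rw [orbs_conj, Finset.image_val_of_injOn
    ((Finset.image_injective τ.injective).injOn), Multiset.map_map]
  apply Multiset.map_congr rfl
  intro O _
  unfold dat
  simp only [Function.comp_apply]
  rw [Finset.card_image_of_injective _ τ.injective,
    Finset.sum_image (fun x _ y _ h => τ.injective h)]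
  simp

lemma inva_conj_base (a b : Fin m → ZMod n) (σ : Perm (Fin m)) :
    inva (fun j => b j + a j - b (σ⁻¹ j)) σ = inva a σ := by
  unfold inva
  apply Multiset.map_congr rfl
  intro O hO
  have hO' : O ∈ orbs σ := hO
  unfold dat
  have hsum : ∑ k ∈ O, b (σ⁻¹ k) = ∑ k ∈ O, b k := by
    apply Finset.sum_nbij' (fun k => σ⁻¹ k) (fun k => σ k)
    · intro k hk; exact inv_mem_orb hO' hk
    · intro k hk
      obtain ⟨j, rfl⟩ := mem_orbs.1 hO'
      exact mem_orb.2 ((mem_orb.1 hk).apply_right)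
    · intro k _; simp
    · intro k _; simp
    · intro k _; rfl
  congr 1
  rw [Finset.sum_sub_distrib, Finset.sum_add_distrib, hsum]
  abel

theorem Φ_conj (x y : WreathProd n m) : Φ (y * x * y⁻¹) = Φ x := by
  obtain ⟨a, σ, rfl⟩ := mk'_surj x
  obtain ⟨b, τ, rfl⟩ := mk'_surj y
  rw [mk'_decomp b τ, mul_inv_rev]
  have : mk' b 1 * mk' 0 τ * mk' a σ * ((mk' 0 τ)⁻¹ * (mk' b 1)⁻¹)
      = mk' b 1 * (mk' 0 τ * mk' a σ * (mk' 0 τ)⁻¹) * (mk' b 1)⁻¹ := by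
    group
  rw [this, conj_perm, conj_base, Φ_mk', Φ_mk',
    inva_conj_base (fun j => a (τ⁻¹ j)) b (τ * σ * τ⁻¹), inva_conj_perm]

end Orb

section Idx

open Function

variable {σ : Perm (Fin m)}

lemma perm_periodic (σ : Perm (Fin m)) (j : Fin m) : j ∈ periodicPts ⇑σ := by
  refine mem_periodicPts.2 ⟨orderOf σ, orderOf_pos σ, ?_⟩
  show σ^[orderOf σ] j = j
  rw [Equiv.Perm.iterate_eq_pow, pow_orderOf_eq_one]; rfl

lemma minPeriod_pos (σ : Perm (Fin m)) (j : Fin m) : 0 < minimalPeriod ⇑σ j :=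
  minimalPeriod_pos_of_mem_periodicPts (perm_periodic σ j)

lemma pow_minPeriod (σ : Perm (Fin m)) (j : Fin m) :
    (σ ^ minimalPeriod ⇑σ j) j = j := by
  have := iterate_minimalPeriod (f := ⇑σ) (x := j)
  rwa [Equiv.Perm.iterate_eq_pow] at this

lemma orb_eq_image (σ : Perm (Fin m)) (j : Fin m) :
    orb σ j = (Finset.range (minimalPeriod ⇑σ j)).image (fun i => (σ ^ i) j) := by
  ext k
  simp only [mem_orb, Finset.mem_image, Finset.mem_range]
  constructor
  · intro h
    obtain ⟨i, -, hi⟩ := h.exists_pow_eq'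
    refine ⟨i % minimalPeriod ⇑σ j, Nat.mod_lt _ (minPeriod_pos σ j), ?_⟩
    have := iterate_mod_minimalPeriod_eq (f := ⇑σ) (x := j) (n := i)
    rw [Equiv.Perm.iterate_eq_pow, Equiv.Perm.iterate_eq_pow] at this
    rw [this, hi]
  · rintro ⟨i, -, rfl⟩
    exact SameCycle.pow_right SameCycle.rfl

lemma card_orb (σ : Perm (Fin m)) (j : Fin m) :
    (orb σ j).card = minimalPeriod ⇑σ j := by
  rw [orb_eq_image]
  rw [Finset.card_image_of_injOn, Finset.card_range]
  intro i hi i' hi' h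
  exact iterate_injOn_Iio_minimalPeriod (by simpa using hi) (by simpa using hi') h

lemma pow_orb_inj {σ : Perm (Fin m)} {j : Fin m} {i i' : ℕ}
    (hi : i < (orb σ j).card) (hi' : i' < (orb σ j).card)
    (h : (σ ^ i) j = (σ ^ i') j) : i = i' := by
  rw [card_orb] at hi hi'
  exact iterate_injOn_Iio_minimalPeriod (by simpa using hi) (by simpa using hi') h

lemma pow_card_orb (σ : Perm (Fin m)) (j : Fin m) : (σ ^ (orb σ j).card) j = j := by
  rw [card_orb]; exact pow_minPeriod σ j

/-- The canonical representative (minimum) of the cycle of `j`. -/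
def rep (σ : Perm (Fin m)) (j : Fin m) : Fin m :=
  (orb σ j).min' ⟨j, self_mem_orb σ j⟩

lemma rep_mem (σ : Perm (Fin m)) (j : Fin m) : rep σ j ∈ orb σ j :=
  (orb σ j).min'_mem _

lemma rep_sameCycle (σ : Perm (Fin m)) (j : Fin m) : σ.SameCycle (rep σ j) j :=
  (mem_orb.1 (rep_mem σ j)).symm

lemma rep_eq_of_mem {σ : Perm (Fin m)} {O : Finset (Fin m)} (hO : O ∈ orbs σ) {k : Fin m}
    (hk : k ∈ O) : rep σ k = O.min' ⟨k, hk⟩ := by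
  unfold rep
  congr 1
  exact orb_eq_of_mem hO hk

lemma rep_eq_rep {σ : Perm (Fin m)} {j k : Fin m} (h : σ.SameCycle j k) :
    rep σ k = rep σ j := by
  unfold rep; congr 1
  exact orb_eq_of_sameCycle h

lemma orb_rep (σ : Perm (Fin m)) (j : Fin m) : orb σ (rep σ j) = orb σ j :=
  orb_eq_of_sameCycle (mem_orb.1 (rep_mem σ j))

lemma exists_pow_rep (σ : Perm (Fin m)) (j : Fin m) : ∃ i : ℕ, (σ ^ i) (rep σ j) = j := by
  obtain ⟨i, -, hi⟩ := (rep_sameCycle σ j).exists_pow_eq'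
  exact ⟨i, hi⟩

/-- The index of `j` in its cycle, counted from the representative. -/
noncomputable def idx (σ : Perm (Fin m)) (j : Fin m) : ℕ := Nat.find (exists_pow_rep σ j)

lemma idx_spec (σ : Perm (Fin m)) (j : Fin m) : (σ ^ idx σ j) (rep σ j) = j :=
  Nat.find_spec (exists_pow_rep σ j)

lemma idx_min {σ : Perm (Fin m)} {j : Fin m} {t : ℕ} (h : t < idx σ j) :
    (σ ^ t) (rep σ j) ≠ j :=
  Nat.find_min (exists_pow_rep σ j) h

lemma idx_le {σ : Perm (Fin m)} {j : Fin m} {t : ℕ} (h : (σ ^ t) (rep σ j) = j) :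
    idx σ j ≤ t :=
  Nat.find_min' (exists_pow_rep σ j) h

lemma idx_rep (σ : Perm (Fin m)) (j : Fin m) : idx σ (rep σ j) = 0 := by
  have : rep σ (rep σ j) = rep σ j := rep_eq_rep (mem_orb.1 (rep_mem σ j))
  have h0 : (σ ^ 0) (rep σ (rep σ j)) = rep σ j := by rw [this]; rfl
  exact Nat.le_zero.1 (idx_le h0)

lemma idx_lt (σ : Perm (Fin m)) (j : Fin m) : idx σ j < (orb σ j).card := by
  obtain ⟨i, hi⟩ := exists_pow_rep σ j
  have hcard : (orb σ (rep σ j)).card = (orb σ j).card := by rw [orb_rep]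
  have hppos : 0 < (orb σ j).card := Finset.card_pos.2 ⟨j, self_mem_orb σ j⟩
  have hmod : (σ ^ (i % (orb σ j).card)) (rep σ j) = j := by
    have h2 := iterate_mod_minimalPeriod_eq (f := ⇑σ) (x := rep σ j) (n := i)
    rw [Equiv.Perm.iterate_eq_pow, Equiv.Perm.iterate_eq_pow, ← card_orb, hcard] at h2
    exact h2.trans hi
  exact lt_of_le_of_lt (idx_le hmod) (Nat.mod_lt _ hppos)

lemma idx_pow_rep {σ : Perm (Fin m)} {j : Fin m} {i : ℕ} (h : i < (orb σ j).card) :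
    idx σ ((σ ^ i) (rep σ j)) = i := by
  set k := (σ ^ i) (rep σ j) with hk
  have hsc : σ.SameCycle j k := by
    refine (rep_sameCycle σ j).symm.trans ?_
    exact SameCycle.pow_right SameCycle.rfl
  have hrep : rep σ k = rep σ j := rep_eq_rep hsc
  have horb : orb σ k = orb σ j := orb_eq_of_sameCycle hsc
  have hle : idx σ k ≤ i := idx_le (by rw [hrep, ← hk])
  have h1 : (σ ^ idx σ k) (rep σ j) = (σ ^ i) (rep σ j) := by
    have h2 := idx_spec σ k
    rw [hrep] at h2
    rw [h2]
  have : idx σ k = i := by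
    refine pow_orb_inj (j := rep σ j) ?_ ?_ h1 <;> rw [orb_rep] <;>
      [exact lt_of_le_of_lt hle h; exact h]
  exact this

lemma idx_apply {σ : Perm (Fin m)} {i : Fin m} (h : σ i ≠ rep σ i) :
    idx σ (σ i) = idx σ i + 1 := by
  have hsc : σ.SameCycle i (σ i) := ⟨1, by simp⟩
  have hrep : rep σ (σ i) = rep σ i := rep_eq_rep hsc
  have hspec : (σ ^ (idx σ i + 1)) (rep σ (σ i)) = σ i := by
    rw [hrep, pow_succ', Equiv.Perm.mul_apply, idx_spec]
  have hle : idx σ (σ i) ≤ idx σ i + 1 := idx_le hspec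
  rcases lt_or_eq_of_le hle with hlt | heq
  · exfalso
    rcases Nat.eq_zero_or_pos (idx σ (σ i)) with h0 | hpos
    · have h2 := idx_spec σ (σ i)
      rw [h0, pow_zero, hrep] at h2
      simp at h2
      exact h h2.symm
    · obtain ⟨s, hs⟩ : ∃ s, idx σ (σ i) = s + 1 := ⟨idx σ (σ i) - 1, by omega⟩
      have hspec2 := idx_spec σ (σ i)
      rw [hs, hrep, pow_succ', Equiv.Perm.mul_apply] at hspec2
      have h3 : (σ ^ s) (rep σ i) = i := σ.injective hspec2
      exact idx_min (by omega) h3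
  · exact heq

lemma idx_apply_eq_zero {σ : Perm (Fin m)} {i : Fin m} (h : σ i = rep σ i) :
    idx σ i + 1 = (orb σ i).card := by
  have hsc : σ.SameCycle i (σ i) := ⟨1, by simp⟩
  have hrep : rep σ (σ i) = rep σ i := rep_eq_rep hsc
  have hper : (σ ^ (idx σ i + 1)) (rep σ i) = rep σ i := by
    rw [pow_succ', Equiv.Perm.mul_apply, idx_spec, h]
  -- minimal period of rep divides idx+1; idx+1 ≤ card; so equal
  have hcard : (orb σ (rep σ i)).card = (orb σ i).card := by rw [orb_rep]
  have hdvd : minimalPeriod ⇑σ (rep σ i) ∣ idx σ i + 1 := by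
    apply IsPeriodicPt.minimalPeriod_dvd
    show σ^[idx σ i + 1] (rep σ i) = rep σ i
    rw [Equiv.Perm.iterate_eq_pow]; exact hper
  have hlt : idx σ i + 1 ≤ (orb σ i).card := idx_lt σ i
  have hple : (orb σ i).card ≤ idx σ i + 1 :=
    hcard ▸ (card_orb σ (rep σ i)) ▸ Nat.le_of_dvd (Nat.succ_pos _) hdvd
  omega

end Idx

section Conc

/-- The concentrated representative of `a` relative to `σ`: all the mass of each
cycle is placed at the cycle's representative. -/
noncomputable def conc (σ : Perm (Fin m)) (a : Fin m → ZMod n) : Fin m → ZMod n :=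
  fun j => if j = rep σ j then ∑ k ∈ orb σ j, a k else 0

lemma sum_pow_orb (σ : Perm (Fin m)) (j : Fin m) (f : Fin m → ZMod n) :
    ∑ s ∈ Finset.range ((orb σ j).card), f ((σ ^ s) j) = ∑ k ∈ orb σ j, f k := by
  rw [card_orb, orb_eq_image σ j, Finset.sum_image]
  intro x hx y hy h
  exact Function.iterate_injOn_Iio_minimalPeriod
    (by simpa using Finset.mem_range.1 hx) (by simpa using Finset.mem_range.1 hy) h

lemma sum_conc (σ : Perm (Fin m)) (a : Fin m → ZMod n) {O : Finset (Fin m)}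
    (hO : O ∈ orbs σ) : ∑ k ∈ O, conc σ a k = ∑ k ∈ O, a k := by
  obtain ⟨j₀, rfl⟩ := mem_orbs.1 hO
  have hr : rep σ j₀ ∈ orb σ j₀ := rep_mem σ j₀
  have step : ∀ k ∈ orb σ j₀,
      conc σ a k = if k = rep σ j₀ then ∑ x ∈ orb σ j₀, a x else 0 := by
    intro k hk
    have h1 : rep σ k = rep σ j₀ := rep_eq_rep (mem_orb.1 hk)
    have h2 : orb σ k = orb σ j₀ := orb_eq_of_sameCycle (mem_orb.1 hk)
    unfold conc
    rw [h1, h2]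
  rw [Finset.sum_congr rfl step, Finset.sum_ite_eq' (orb σ j₀) (rep σ j₀), if_pos hr]

lemma conc_conj (a : Fin m → ZMod n) (σ : Perm (Fin m)) :
    ∃ b : Fin m → ZMod n, mk' b 1 * mk' a σ * (mk' b 1)⁻¹ = mk' (conc σ a) σ := by
  classical
  set c : Fin m → ZMod n := fun j => conc σ a j - a j with hc
  have hzero : ∀ O ∈ orbs σ, ∑ k ∈ O, c k = 0 := by
    intro O hO
    rw [hc, Finset.sum_sub_distrib, sum_conc σ a hO, sub_self]
  set b : Fin m → ZMod n :=
    fun j => ∑ t ∈ Finset.range (idx σ j), c ((σ ^ (t + 1)) (rep σ j)) with hb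
  have key : ∀ i : Fin m, b (σ i) - b i = c (σ i) := by
    intro i
    have hsc : σ.SameCycle i (σ i) := ⟨1, by simp⟩
    have hreps : rep σ (σ i) = rep σ i := rep_eq_rep hsc
    by_cases h : σ i = rep σ i
    · -- `σ i` is the representative; wrap-around case
      have hrepself : rep σ (σ i) = σ i := hreps.trans h.symm
      have hidx0 : idx σ (σ i) = 0 :=
        Nat.le_zero.1 (idx_le (by rw [pow_zero, hrepself]; rfl))
      have hb0 : b (σ i) = 0 := by rw [hb]; simp [hidx0]
      have hsum : ∑ s ∈ Finset.range (idx σ i + 1), c ((σ ^ s) (rep σ i)) = 0 := by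
        have hcard : idx σ i + 1 = (orb σ (rep σ i)).card := by
          rw [idx_apply_eq_zero h]
          rw [orb_rep]
        rw [hcard, sum_pow_orb σ (rep σ i) c, hzero _ (orb_mem_orbs σ (rep σ i))]
      rw [Finset.sum_range_succ'] at hsum
      -- hsum : (∑ t in range (idx σ i), c (σ^(t+1) (rep σ i))) + c (σ^0 (rep σ i)) = 0
      rw [hb0, hb]
      have hcs : c (σ i) = c ((σ ^ 0) (rep σ i)) := by rw [pow_zero, ← h]; rfl
      rw [hcs]
      have := hsum
      linear_combination -this
    · -- generic case
      have hidx : idx σ (σ i) = idx σ i + 1 := idx_apply h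
      have hbs : b (σ i) = b i + c ((σ ^ (idx σ i + 1)) (rep σ i)) := by
        rw [hb]
        simp only
        rw [hidx, hreps, Finset.sum_range_succ]
      rw [hbs]
      have hpow : (σ ^ (idx σ i + 1)) (rep σ i) = σ i := by
        rw [pow_succ', Equiv.Perm.mul_apply, idx_spec]
      rw [hpow]
      ring
  refine ⟨b, ?_⟩
  rw [conj_base]
  have hfun : (fun j => b j + a j - b (σ⁻¹ j)) = conc σ a := by
    funext j
    have hk := key (σ⁻¹ j)
    rw [show σ (σ⁻¹ j) = j from σ.apply_symm_apply j] at hk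
    have : c j = conc σ a j - a j := by rw [hc]
    linear_combination hk + this
  rw [hfun]

end Conc

section Match

/-- Fibers of a map on a finset, as a subtype of a filter. -/
def finFiber {γ δ : Type*} [DecidableEq γ] [DecidableEq δ] (s : Finset γ) (f : γ → δ) (v : δ) :
    {x : {x // x ∈ s} // f x.1 = v} ≃ {x // x ∈ s.filter fun y => f y = v} where
  toFun x := ⟨x.1.1, Finset.mem_filter.2 ⟨x.1.2, x.2⟩⟩
  invFun x := ⟨⟨x.1, (Finset.mem_filter.1 x.2).1⟩, (Finset.mem_filter.1 x.2).2⟩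
  left_inv x := rfl
  right_inv x := rfl

lemma exists_matching {γ δ : Type*} [DecidableEq γ] [DecidableEq δ]
    (s t : Finset γ) (f g : γ → δ) (h : s.val.map f = t.val.map g) :
    ∃ E : {x // x ∈ s} ≃ {x // x ∈ t}, ∀ x, g (E x).1 = f x.1 := by
  classical
  have hcard : ∀ v, (s.filter fun y => f y = v).card = (t.filter fun y => g y = v).card := by
    intro v
    have h1 := congrArg (Multiset.count v) h
    rw [Multiset.count_map, Multiset.count_map] at h1
    simpa [eq_comm, Finset.card_def, Finset.filter_val] using h1
  have hc : ∀ v, Fintype.card {x // x ∈ s.filter fun y => f y = v}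
      = Fintype.card {x // x ∈ t.filter fun y => g y = v} := by
    intro v
    rw [Fintype.card_coe, Fintype.card_coe]
    exact hcard v
  exact ⟨Equiv.ofFiberEquiv (f := fun x : {x // x ∈ s} => f x.1)
      (g := fun x : {x // x ∈ t} => g x.1)
      (fun v => (finFiber s f v).trans ((Fintype.equivOfCardEq (hc v)).trans
        (finFiber t g v).symm)),
    fun x => Equiv.ofFiberEquiv_map (f := fun x : {x // x ∈ s} => f x.1)
      (g := fun x : {x // x ∈ t} => g x.1) _ x⟩

lemma pow_mem_orb (σ : Perm (Fin m)) (j : Fin m) (i : ℕ) : (σ ^ i) j ∈ orb σ j :=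
  mem_orb.2 (SameCycle.pow_right SameCycle.rfl)

lemma rep_eq_rep_of_orb_eq {σ : Perm (Fin m)} {j k : Fin m} (h : orb σ j = orb σ k) :
    rep σ j = rep σ k :=
  (rep_eq_rep (mem_orb.1 (h ▸ self_mem_orb σ k))).symm

lemma conc_perm_conj (a a' : Fin m → ZMod n) (σ σ' : Perm (Fin m))
    (h : inva a σ = inva a' σ') :
    ∃ τ : Perm (Fin m), mk' 0 τ * mk' (conc σ a) σ * (mk' 0 τ)⁻¹ = mk' (conc σ' a') σ' := by
  classical
  obtain ⟨E, hE⟩ := exists_matching (orbs σ) (orbs σ') (dat a) (dat a') h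
  have hne : ∀ X : {O // O ∈ orbs σ'}, X.1.Nonempty := by
    rintro ⟨O, hO⟩
    obtain ⟨j, rfl⟩ := mem_orbs.1 hO
    exact ⟨j, self_mem_orb σ' j⟩
  set r' : {O // O ∈ orbs σ'} → Fin m := fun X => X.1.min' (hne X) with hr'
  have hrmem : ∀ X, r' X ∈ X.1 := fun X => X.1.min'_mem _
  have hrep' : ∀ X k, k ∈ X.1 → rep σ' k = r' X := by
    intro X k hk
    rw [rep_eq_of_mem X.2 hk]
  have hrepr' : ∀ X, rep σ' (r' X) = r' X := fun X => hrep' X _ (hrmem X)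
  have horbr' : ∀ X, orb σ' (r' X) = X.1 := fun X => orb_eq_of_mem X.2 (hrmem X)
  set Xof : Fin m → {O // O ∈ orbs σ} := fun j => ⟨orb σ j, orb_mem_orbs σ j⟩ with hXof
  set t0 : Fin m → Fin m := fun j => (σ' ^ idx σ j) (r' (E (Xof j))) with ht0
  -- basic facts
  have hcardE : ∀ j, ((E (Xof j)).1).card = (orb σ j).card := by
    intro j
    have := hE (Xof j)
    exact congrArg Prod.fst this
  have hsumE : ∀ j, (∑ k ∈ (E (Xof j)).1, a' k) = ∑ k ∈ orb σ j, a k := by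
    intro j
    have := hE (Xof j)
    exact congrArg Prod.snd this
  have ht0mem : ∀ j, t0 j ∈ (E (Xof j)).1 := by
    intro j
    rw [ht0]
    have := pow_mem_orb σ' (r' (E (Xof j))) (idx σ j)
    rwa [horbr'] at this
  have horbt0 : ∀ j, orb σ' (t0 j) = (E (Xof j)).1 := fun j =>
    orb_eq_of_mem (E (Xof j)).2 (ht0mem j)
  have hidxlt : ∀ j, idx σ j < (orb σ' (r' (E (Xof j)))).card := by
    intro j
    rw [horbr', hcardE]
    exact idx_lt σ j
  have hidxt0 : ∀ j, idx σ' (t0 j) = idx σ j := by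
    intro j
    have := idx_pow_rep (σ := σ') (j := r' (E (Xof j))) (i := idx σ j) (hidxlt j)
    rwa [hrepr'] at this
  have hXeq : ∀ {j₁ j₂ : Fin m}, orb σ j₁ = orb σ j₂ → Xof j₁ = Xof j₂ := by
    intro j₁ j₂ hh
    exact Subtype.ext hh
  -- injectivity
  have hinj : Function.Injective t0 := by
    intro j₁ j₂ hj
    have hX : Xof j₁ = Xof j₂ := by
      have h1 : (E (Xof j₁)).1 = (E (Xof j₂)).1 := by
        rw [← horbt0, ← horbt0, hj]
      exact E.injective (Subtype.ext h1)
    have hidx : idx σ j₁ = idx σ j₂ := by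
      rw [← hidxt0 j₁, hj, hidxt0 j₂]
    have hrep : rep σ j₁ = rep σ j₂ := by
      apply rep_eq_rep_of_orb_eq
      exact congrArg Subtype.val hX
    have s1 := idx_spec σ j₁
    have s2 := idx_spec σ j₂
    rw [hidx, hrep] at s1
    rw [s2] at s1
    exact s1.symm
  set τ : Perm (Fin m) := Equiv.ofBijective t0 (Finite.injective_iff_bijective.1 hinj) with hτ
  have hτa : ∀ j, τ j = t0 j := fun j => rfl
  -- conjugation identity
  have hconj : ∀ j, t0 (σ j) = σ' (t0 j) := by
    intro j
    have hXs : Xof (σ j) = Xof j :=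
      hXeq (orb_eq_of_sameCycle ⟨1, by simp⟩ : orb σ (σ j) = orb σ j)
    by_cases hcase : σ j = rep σ j
    · have hreps : rep σ (σ j) = σ j := (rep_eq_rep ⟨1, by simp⟩).trans hcase.symm
      have hidx0 : idx σ (σ j) = 0 :=
        Nat.le_zero.1 (idx_le (by rw [pow_zero, hreps]; rfl))
      have hcard : idx σ j + 1 = ((E (Xof j)).1).card := by
        rw [idx_apply_eq_zero hcase, ← hcardE]
      have : σ' (t0 j) = (σ' ^ (idx σ j + 1)) (r' (E (Xof j))) := by
        rw [ht0]
        simp only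
        rw [pow_succ', Equiv.Perm.mul_apply]
      rw [this, hcard]
      have hfix : (σ' ^ ((E (Xof j)).1).card) (r' (E (Xof j))) = r' (E (Xof j)) := by
        have := pow_card_orb σ' (r' (E (Xof j)))
        rwa [horbr'] at this
      rw [hfix, ht0]
      simp only
      rw [hXs, hidx0, pow_zero]
      rfl
    · have hidxs : idx σ (σ j) = idx σ j + 1 := idx_apply hcase
      rw [ht0]
      simp only
      rw [hXs, hidxs, pow_succ', Equiv.Perm.mul_apply]
  have hconjτ : τ * σ * τ⁻¹ = σ' := by
    apply Equiv.ext; intro k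
    have h1 : ∀ j, τ (σ j) = σ' (τ j) := fun j => by rw [hτa, hτa]; exact hconj j
    have := h1 (τ⁻¹ k)
    rw [show τ (τ⁻¹ k) = k from τ.apply_symm_apply k] at this
    simpa using this
  -- decoration identity
  have hdec : ∀ j, conc σ a j = conc σ' a' (t0 j) := by
    intro j
    have hrept0 : rep σ' (t0 j) = r' (E (Xof j)) := hrep' _ _ (ht0mem j)
    have hiff : j = rep σ j ↔ t0 j = rep σ' (t0 j) := by
      constructor
      · intro hj
        have hidx0 : idx σ j = 0 := by
          have := idx_rep σ j
          rwa [← hj] at this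
        rw [hrept0, ht0]
        simp only
        rw [hidx0, pow_zero]
        rfl
      · intro hj
        have h0 : idx σ' (t0 j) = 0 := by
          rw [hj]
          exact idx_rep σ' (t0 j)
        rw [hidxt0] at h0
        have := idx_spec σ j
        rw [h0, pow_zero] at this
        exact this.symm
    unfold conc
    by_cases hj : j = rep σ j
    · rw [if_pos hj, if_pos (hiff.1 hj), horbt0, hsumE]
    · rw [if_neg hj, if_neg (fun hc => hj (hiff.2 hc))]
  refine ⟨τ, ?_⟩
  rw [conj_perm, hconjτ]
  have : (fun j => conc σ a (τ⁻¹ j)) = conc σ' a' := by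
    funext k
    have := hdec (τ⁻¹ k)
    rw [this]
    have ht : t0 (τ⁻¹ k) = k := by
      have : τ (τ⁻¹ k) = k := τ.apply_symm_apply k
      rwa [hτa] at this
    rw [ht]
  rw [this]

end Match

section Complete

lemma isConj_iff' {G : Type*} [Group G] {a b : G} : IsConj a b ↔ ∃ c, c * a * c⁻¹ = b := by
  rw [isConj_iff]

theorem isConj_of_Φ_eq {x y : WreathProd n m} (h : Φ x = Φ y) : IsConj x y := by
  obtain ⟨a, σ, rfl⟩ := mk'_surj x
  obtain ⟨a', σ', rfl⟩ := mk'_surj y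
  rw [Φ_mk', Φ_mk'] at h
  obtain ⟨b, hb⟩ := conc_conj a σ
  obtain ⟨b', hb'⟩ := conc_conj a' σ'
  obtain ⟨τ, hτ⟩ := conc_perm_conj a a' σ σ' h
  have h1 : IsConj (mk' a σ) (mk' (conc σ a) σ) := isConj_iff'.2 ⟨_, hb⟩
  have h2 : IsConj (mk' (conc σ a) σ) (mk' (conc σ' a') σ') := isConj_iff'.2 ⟨_, hτ⟩
  have h3 : IsConj (mk' a' σ') (mk' (conc σ' a') σ') := isConj_iff'.2 ⟨_, hb'⟩
  exact (h1.trans h2).trans h3.symm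

theorem Φ_eq_of_isConj {x y : WreathProd n m} (h : IsConj x y) : Φ x = Φ y := by
  obtain ⟨c, hc⟩ := isConj_iff'.1 h
  rw [← hc, Φ_conj]

lemma sum_card_orbs (σ : Perm (Fin m)) : ∑ O ∈ orbs σ, O.card = m := by
  classical
  have hdisj : (orbs σ : Set (Finset (Fin m))).PairwiseDisjoint id := by
    intro O₁ h₁ O₂ h₂ hne
    show _root_.Disjoint O₁ O₂
    rw [Finset.disjoint_left]
    intro k hk₁ hk₂
    exact hne ((orb_eq_of_mem h₁ hk₁).symm.trans (orb_eq_of_mem h₂ hk₂))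
  have hcover : (orbs σ).biUnion id = Finset.univ := by
    apply Finset.eq_univ_of_forall
    intro j
    exact Finset.mem_biUnion.2 ⟨orb σ j, orb_mem_orbs σ j, self_mem_orb σ j⟩
  have := Finset.card_biUnion (s := orbs σ) (t := id) (fun O h₁ O' h₂ hne => hdisj h₁ h₂ hne)
  rw [hcover] at this
  simpa using this.symm

lemma Φ_fst_pos (x : WreathProd n m) : ∀ q ∈ Φ x, 0 < q.1 := by
  intro q hq
  obtain ⟨a, σ, rfl⟩ := mk'_surj x
  rw [Φ_mk'] at hq
  obtain ⟨O, hO, rfl⟩ := Multiset.mem_map.1 hq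
  have hO' : O ∈ orbs σ := hO
  obtain ⟨j, rfl⟩ := mem_orbs.1 hO'
  exact Finset.card_pos.2 ⟨j, self_mem_orb σ j⟩

lemma Φ_fst_sum (x : WreathProd n m) : ((Φ x).map Prod.fst).sum = m := by
  obtain ⟨a, σ, rfl⟩ := mk'_surj x
  rw [Φ_mk']
  unfold inva
  rw [Multiset.map_map]
  have : ((orbs σ).val.map (Prod.fst ∘ dat a)).sum = ∑ O ∈ orbs σ, O.card := rfl
  rw [this]
  exact sum_card_orbs σ

end Complete

section Count

variable (n m) in
/-- The classifying data: multisets of (cycle length, cycle sum) pairs. -/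
def Tset := {M : Multiset (ℕ × ZMod n) // (∀ q ∈ M, 0 < q.1) ∧ (M.map Prod.fst).sum = m}

lemma filter_sum' {ι γ : Type*} (p : γ → Prop) [DecidablePred p] (s : Finset ι)
    (f : ι → Multiset γ) :
    Multiset.filter p (∑ i ∈ s, f i) = ∑ i ∈ s, Multiset.filter p (f i) := by
  classical
  induction s using Finset.cons_induction with
  | empty => simp
  | cons x s' hx ih => rw [Finset.sum_cons, Finset.sum_cons, Multiset.filter_add, ih]

lemma map_sum' {ι γ δ : Type*} (g : γ → δ) (s : Finset ι) (f : ι → Multiset γ) :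
    Multiset.map g (∑ i ∈ s, f i) = ∑ i ∈ s, Multiset.map g (f i) := by
  classical
  induction s using Finset.cons_induction with
  | empty => simp
  | cons x s' hx ih => rw [Finset.sum_cons, Finset.sum_cons, Multiset.map_add, ih]

lemma msum_sum {ι γ : Type*} [AddCommMonoid γ] (s : Finset ι) (f : ι → Multiset γ) :
    (∑ i ∈ s, f i).sum = ∑ i ∈ s, (f i).sum := by
  classical
  induction s using Finset.cons_induction with
  | empty => simp
  | cons x s' hx ih => rw [Finset.sum_cons, Finset.sum_cons, Multiset.sum_add, ih]

lemma fiber_sum {δ : Type*} [DecidableEq δ] [Fintype δ] (M : Multiset (ℕ × δ)) :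
    ∑ v : δ, M.filter (fun q => q.2 = v) = M := by
  induction M using Multiset.induction with
  | empty => simp
  | cons q M ih =>
    have step : ∀ v : δ, (q ::ₘ M).filter (fun x => x.2 = v)
        = (if q.2 = v then ({q} : Multiset (ℕ × δ)) else 0) + M.filter (fun x => x.2 = v) :=
      fun v => Multiset.filter_cons (a := q) M
    rw [Finset.sum_congr rfl fun v _ => step v, Finset.sum_add_distrib, ih,
      Finset.sum_ite_eq Finset.univ q.2 (fun _ => ({q} : Multiset (ℕ × δ))),
      if_pos (Finset.mem_univ _), Multiset.singleton_add]

/-- Tuples of partitions with total size `m`, colored by `Fin n`. -/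
abbrev Sty (n m : ℕ) := Σ l : {l : Fin n → ℕ // l ∈ Finset.Nat.antidiagonalTuple n m},
  ∀ i : Fin n, Nat.Partition (l.1 i)

def gmap (e' : Fin n ≃ ZMod n) (x : Sty n m) : Multiset (ℕ × ZMod n) :=
  ∑ i : Fin n, (x.2 i).parts.map (fun d => (d, e' i))

lemma gmap_filter (e' : Fin n ≃ ZMod n) (x : Sty n m) (i₀ : Fin n) :
    (gmap e' x).filter (fun q => q.2 = e' i₀) = (x.2 i₀).parts.map (fun d => (d, e' i₀)) := by
  unfold gmap
  rw [filter_sum']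
  have step : ∀ i : Fin n, ((x.2 i).parts.map fun d => (d, e' i)).filter (fun q => q.2 = e' i₀)
      = if i = i₀ then (x.2 i).parts.map (fun d => (d, e' i)) else 0 := by
    intro i
    rw [Multiset.filter_map]
    by_cases hi : i = i₀
    · subst hi
      rw [if_pos rfl]
      congr 1
      apply Multiset.filter_eq_self.2
      intro d _
      simp
    · rw [if_neg hi]
      have hnone : ∀ d ∈ (x.2 i).parts,
          ¬ (((fun q : ℕ × ZMod n => q.2 = e' i₀) ∘ (fun d => (d, e' i))) d) := by
        intro d _
        exact fun hc => hi (e'.injective hc)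
      rw [Multiset.filter_eq_nil.2 hnone, Multiset.map_zero]
  rw [Finset.sum_congr rfl fun i _ => step i,
    Finset.sum_ite_eq' Finset.univ i₀ (fun i => (x.2 i).parts.map (fun d => (d, e' i))),
    if_pos (Finset.mem_univ _)]

lemma gmap_extract (e' : Fin n ≃ ZMod n) (x : Sty n m) (i₀ : Fin n) :
    ((gmap e' x).filter (fun q => q.2 = e' i₀)).map Prod.fst = (x.2 i₀).parts := by
  rw [gmap_filter, Multiset.map_map]
  simp

lemma gmap_mem (e' : Fin n ≃ ZMod n) (x : Sty n m) :
    (∀ q ∈ gmap e' x, 0 < q.1) ∧ ((gmap e' x).map Prod.fst).sum = m := by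
  constructor
  · intro q hq
    unfold gmap at hq
    rw [Multiset.mem_sum] at hq
    obtain ⟨i, -, hi⟩ := hq
    obtain ⟨d, hd, rfl⟩ := Multiset.mem_map.1 hi
    exact (x.2 i).parts_pos hd
  · unfold gmap
    rw [map_sum']
    have step : ∀ i : Fin n, (((x.2 i).parts.map fun d => (d, e' i)).map Prod.fst).sum
        = x.1.1 i := by
      intro i
      rw [Multiset.map_map]
      have : (Prod.fst ∘ fun d : ℕ => (d, e' i)) = id := rfl
      rw [this, Multiset.map_id, (x.2 i).parts_sum]
    rw [msum_sum, Finset.sum_congr rfl fun i _ => step i]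
    exact Finset.Nat.mem_antidiagonalTuple.1 x.1.2

def TEquivFun (e' : Fin n ≃ ZMod n) (x : Sty n m) : Tset n m :=
  ⟨gmap e' x, gmap_mem e' x⟩

lemma TEquiv_bij [NeZero n] (e' : Fin n ≃ ZMod n) : Function.Bijective (TEquivFun (n := n) (m := m) e') := by
  constructor
  · rintro ⟨⟨l, hl⟩, P⟩ ⟨⟨l', hl'⟩, P'⟩ hxy
    have hg : gmap e' ⟨⟨l, hl⟩, P⟩ = gmap e' ⟨⟨l', hl'⟩, P'⟩ := congrArg Subtype.val hxy
    have hparts : ∀ i, (P i).parts = (P' i).parts := by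
      intro i
      rw [← gmap_extract e' ⟨⟨l, hl⟩, P⟩ i, ← gmap_extract e' ⟨⟨l', hl'⟩, P'⟩ i, hg]
    have hll : l = l' := by
      funext i
      exact ((P i).parts_sum).symm.trans
        ((congrArg Multiset.sum (hparts i)).trans ((P' i).parts_sum))
    subst hll
    have hPP : P = P' := funext fun i => Nat.Partition.ext (hparts i)
    subst hPP
    rfl
  · rintro ⟨M, hpos, hsum⟩
    classical
    set l : Fin n → ℕ := fun i => ((M.filter (fun q => q.2 = e' i)).map Prod.fst).sum with hldef
    have hfib : ∑ i : Fin n, M.filter (fun q => q.2 = e' i) = M :=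
      (Fintype.sum_equiv e' _ (fun v => M.filter (fun q => q.2 = v)) (fun i => rfl)).trans
        (fiber_sum M)
    have hl : l ∈ Finset.Nat.antidiagonalTuple n m := by
      rw [Finset.Nat.mem_antidiagonalTuple]
      calc ∑ i, l i = ((∑ i : Fin n, M.filter (fun q => q.2 = e' i)).map Prod.fst).sum := by
            rw [map_sum', msum_sum]
        _ = m := by rw [hfib, hsum]
    set P : ∀ i : Fin n, Nat.Partition (l i) := fun i =>
      { parts := (M.filter (fun q => q.2 = e' i)).map Prod.fst
        parts_pos := by
          intro d hd
          obtain ⟨q, hq, rfl⟩ := Multiset.mem_map.1 hd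
          exact hpos q (Multiset.mem_of_mem_filter hq)
        parts_sum := rfl } with hPdef
    refine ⟨⟨⟨l, hl⟩, P⟩, ?_⟩
    apply Subtype.ext
    show gmap e' _ = M
    unfold gmap
    simp only
    calc ∑ i : Fin n, ((M.filter (fun q => q.2 = e' i)).map Prod.fst).map (fun d => (d, e' i))
        = ∑ i : Fin n, M.filter (fun q => q.2 = e' i) := by
          apply Finset.sum_congr rfl
          intro i _
          rw [Multiset.map_map]
          have hid : ∀ q ∈ M.filter (fun q => q.2 = e' i),
              ((fun d => (d, e' i)) ∘ Prod.fst) q = q := by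
            intro q hq
            have h2 : q.2 = e' i := Multiset.of_mem_filter (p := fun x : ℕ × ZMod n => x.2 = e' i) hq
            exact Prod.ext rfl h2.symm
          exact (Multiset.map_congr rfl hid).trans (Multiset.map_id _)
      _ = M := hfib

end Count

section Construct

lemma sameCycle_nat {γ : Type*} [Finite γ] (f : Perm γ) (x y : γ) :
    f.SameCycle x y ↔ ∃ t : ℕ, (f ^ t) x = y := by
  constructor
  · intro h
    obtain ⟨t, -, ht⟩ := h.exists_pow_eq'
    exact ⟨t, ht⟩
  · rintro ⟨t, rfl⟩
    exact ⟨(t : ℤ), by rw [zpow_natCast]⟩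

open Fin.NatCast Fin.CommRing in
lemma finRotate_pow (k t : ℕ) (x : Fin (k + 1)) :
    ((finRotate (k + 1)) ^ t) x = x + (t : Fin (k + 1)) := by
  induction t with
  | zero => simp
  | succ t ih =>
    rw [pow_succ', Equiv.Perm.mul_apply, ih, finRotate_succ_apply]
    push_cast
    ring

open Fin.NatCast Fin.CommRing in
lemma exists_rot (K : ℕ) (x y : Fin K) : ∃ t : ℕ, ((finRotate K) ^ t) x = y := by
  cases K with
  | zero => exact absurd x.2 (Nat.not_lt_zero _)
  | succ K =>
    apply (sameCycle_nat _ x y).1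
    rw [sameCycle_nat]
    refine ⟨(y - x).val, ?_⟩
    rw [finRotate_pow, Fin.cast_val_eq_self]
    ring

theorem Φ_surj (M : Multiset (ℕ × ZMod n)) (hpos : ∀ q ∈ M, 0 < q.1)
    (hsum : (M.map Prod.fst).sum = m) : ∃ x : WreathProd n m, Φ x = M := by
  classical
  set L := M.toList with hL
  have hLM : (L : Multiset (ℕ × ZMod n)) = M := Multiset.coe_toList M
  set s := L.length with hs
  set k : Fin s → ℕ := fun i => (L.get i).1 with hk
  set v : Fin s → ZMod n := fun i => (L.get i).2 with hv
  have hkpos : ∀ i, 0 < k i := by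
    intro i
    apply hpos
    rw [← hLM]
    exact Multiset.mem_coe.2 (by simpa using List.get_mem L i.val i.isLt)
  have hcard : Fintype.card (Σ i : Fin s, Fin (k i)) = m := by
    rw [Fintype.card_sigma]
    simp only [Fintype.card_fin]
    have h1 : ∑ i : Fin s, k i = (List.ofFn k).sum := List.sum_ofFn.symm
    have h2 : List.ofFn k = L.map Prod.fst := List.ofFn_getElem_eq_map L Prod.fst
    have h3 : ((L.map Prod.fst : List ℕ) : Multiset ℕ).sum = m := by
      rw [show ((L.map Prod.fst : List ℕ) : Multiset ℕ) = (L : Multiset (ℕ × ZMod n)).map Prod.fst from rfl, hLM, hsum]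
    rw [h1, h2, ← Multiset.sum_coe, h3]
  set e : (Σ i : Fin s, Fin (k i)) ≃ Fin m := Fintype.equivFinOfCardEq hcard with he
  set F : ∀ i : Fin s, Perm (Fin (k i)) := fun i => finRotate (k i) with hF
  set σβ : Perm (Σ i : Fin s, Fin (k i)) := Equiv.Perm.sigmaCongrRightHom _ F with hσβ
  have hσβpow : ∀ (t : ℕ) (x : Σ i : Fin s, Fin (k i)),
      (σβ ^ t) x = ⟨x.1, ((F x.1) ^ t) x.2⟩ := by
    intro t x
    rw [hσβ, ← map_pow]
    rfl
  have hβcyc : ∀ x y : Σ i : Fin s, Fin (k i), σβ.SameCycle x y ↔ x.1 = y.1 := by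
    intro x y
    constructor
    · intro h
      obtain ⟨t, ht⟩ := (sameCycle_nat σβ x y).1 h
      rw [hσβpow] at ht
      have h2 := congrArg Sigma.fst ht
      exact h2
    · rcases x with ⟨i, xi⟩
      rcases y with ⟨i', yi⟩
      intro h
      cases h
      rw [sameCycle_nat]
      obtain ⟨t, ht⟩ := exists_rot (k i) xi yi
      refine ⟨t, ?_⟩
      rw [hσβpow]
      exact congrArg (Sigma.mk i) ht
  set σ : Perm (Fin m) := e.permCongr σβ with hσdef
  have hpow : ∀ (t : ℕ) (j : Fin m), (σ ^ t) j = e ((σβ ^ t) (e.symm j)) := by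
    intro t
    induction t with
    | zero => intro j; simp
    | succ t ih =>
      intro j
      rw [pow_succ, Equiv.Perm.mul_apply, ih, pow_succ, Equiv.Perm.mul_apply]
      rw [hσdef, Equiv.permCongr_apply, Equiv.symm_apply_apply]
  have hSC : ∀ j j' : Fin m, σ.SameCycle j j' ↔ (e.symm j).1 = (e.symm j').1 := by
    intro j j'
    rw [sameCycle_nat, ← hβcyc (e.symm j) (e.symm j'), sameCycle_nat]
    constructor
    · rintro ⟨t, ht⟩
      refine ⟨t, ?_⟩
      rw [hpow] at ht
      rw [← ht]
      simp
    · rintro ⟨t, ht⟩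
      refine ⟨t, ?_⟩
      rw [hpow, ht]
      simp
  set B : Fin s → Finset (Fin m) := fun i => Finset.univ.filter (fun j => (e.symm j).1 = i)
    with hB
  have horbB : ∀ j : Fin m, orb σ j = B (e.symm j).1 := by
    intro j
    ext j'
    rw [mem_orb, hSC, hB]
    simp only [Finset.mem_filter, Finset.mem_univ, true_and]
    exact eq_comm
  have hmemB : ∀ i (x : Fin (k i)), e ⟨i, x⟩ ∈ B i := by
    intro i x
    rw [hB]
    simp
  have hBinj : Function.Injective B := by
    intro i i' hii
    have h1 : e ⟨i, ⟨0, hkpos i⟩⟩ ∈ B i' := hii ▸ hmemB i ⟨0, hkpos i⟩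
    rw [hB] at h1
    simpa using h1
  have horbs : orbs σ = Finset.univ.image B := by
    ext O
    rw [mem_orbs, Finset.mem_image]
    constructor
    · rintro ⟨j, rfl⟩
      exact ⟨(e.symm j).1, Finset.mem_univ _, (horbB j).symm⟩
    · rintro ⟨i, -, rfl⟩
      refine ⟨e ⟨i, ⟨0, hkpos i⟩⟩, ?_⟩
      rw [horbB]
      simp
  have hBim : ∀ i, B i = Finset.univ.image (fun x : Fin (k i) => e ⟨i, x⟩) := by
    intro i
    ext j
    rw [hB]
    simp only [Finset.mem_filter, Finset.mem_univ, true_and, Finset.mem_image]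
    constructor
    · intro h
      rcases hpq : e.symm j with ⟨i₀, x₀⟩
      rw [hpq] at h
      simp only at h
      subst h
      refine ⟨x₀, ?_⟩
      rw [← hpq]
      simp
    · rintro ⟨x, rfl⟩
      simp
  have hinjx : ∀ i, Function.Injective (fun x : Fin (k i) => e ⟨i, x⟩) := by
    intro i x y hxy
    have h2 : (⟨i, x⟩ : Σ i : Fin s, Fin (k i)) = ⟨i, y⟩ := e.injective hxy
    exact eq_of_heq (Sigma.ext_iff.1 h2).2
  have hcardB : ∀ i, (B i).card = k i := by
    intro i
    rw [hBim, Finset.card_image_of_injective _ (hinjx i), Finset.card_univ, Fintype.card_fin]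
  set a : Fin m → ZMod n :=
    fun j => if ((e.symm j).2 : ℕ) = 0 then v (e.symm j).1 else 0 with ha
  have hsumB : ∀ i, ∑ j ∈ B i, a j = v i := by
    intro i
    rw [hBim, Finset.sum_image (fun x _ y _ h => hinjx i h)]
    have step : ∀ x : Fin (k i), a (e ⟨i, x⟩)
        = if x = ⟨0, hkpos i⟩ then v i else 0 := by
      intro x
      rw [ha]
      simp only
      rw [show e.symm (e ⟨i, x⟩) = ⟨i, x⟩ from e.symm_apply_apply _]
      simp [Fin.ext_iff]
    rw [Finset.sum_congr rfl fun x _ => step x,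
      Finset.sum_ite_eq' Finset.univ (⟨0, hkpos i⟩ : Fin (k i)) (fun _ => v i),
      if_pos (Finset.mem_univ _)]
  refine ⟨mk' a σ, ?_⟩
  rw [Φ_mk']
  unfold inva
  rw [horbs, Finset.image_val_of_injOn hBinj.injOn, Multiset.map_map]
  have hdat : (dat a ∘ B) = L.get := by
    funext i
    have h1 : dat a (B i) = (k i, v i) := Prod.ext (hcardB i) (hsumB i)
    rw [Function.comp_apply, h1, hk, hv]
  rw [hdat, Fin.univ_val_map, List.ofFn_get, hLM]

end Construct

section Final

lemma card_Tset [NeZero n] (e' : Fin n ≃ ZMod n) :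
    Nat.card (Tset n m) = ∑ l ∈ Finset.Nat.antidiagonalTuple n m,
      ∏ i : Fin n, Fintype.card (Nat.Partition (l i)) := by
  rw [← Nat.card_eq_of_bijective _ (TEquiv_bij (n := n) (m := m) e')]
  rw [Nat.card_eq_fintype_card, Fintype.card_sigma]
  have hstep : ∀ l : {l : Fin n → ℕ // l ∈ Finset.Nat.antidiagonalTuple n m},
      Fintype.card (∀ i, Nat.Partition (l.1 i)) = ∏ i, Fintype.card (Nat.Partition (l.1 i)) :=
    fun l => Fintype.card_pi
  rw [Finset.sum_congr rfl fun l _ => hstep l]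
  exact Finset.sum_coe_sort (Finset.Nat.antidiagonalTuple n m)
    (fun l => ∏ i, Fintype.card (Nat.Partition (l i)))

lemma card_conjClasses_eq_card_Tset :
    Nat.card (ConjClasses (WreathProd n m)) = Nat.card (Tset n m) := by
  apply Nat.card_eq_of_bijective
    (fun c => Quotient.liftOn c
      (fun x => (⟨Φ x, Φ_fst_pos x, Φ_fst_sum x⟩ : Tset n m))
      (fun x y h => Subtype.ext (Φ_eq_of_isConj h)))
  constructor
  · intro c₁ c₂
    refine Quotient.inductionOn₂ c₁ c₂ fun x y h => ?_
    exact Quotient.sound (isConj_of_Φ_eq (congrArg Subtype.val h))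
  · rintro ⟨M, hpos, hsum⟩
    obtain ⟨x, hx⟩ := Φ_surj M hpos hsum
    exact ⟨ConjClasses.mk x, Subtype.ext hx⟩

end Final
end WP

/-- The number of conjugacy classes of the wreath product
`Z_n ≀ S_m` equals `∑ p(l_1)·…·p(l_n)`, the sum running over all `n`-tuples
`(l_1,…,l_n)` of naturals with `l_1 + … + l_n = m`, where `p(l)` is the number of
partitions of `l`. -/
theorem card_conjClasses_wreathProd (n m : ℕ) (hn : 2 ≤ n) (hm : 2 ≤ m) :
    Nat.card (ConjClasses (WreathProd n m))
      = ∑ l ∈ Finset.Nat.antidiagonalTuple n m, ∏ i : Fin n, Fintype.card (Nat.Partition (l i)) := by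
  have : NeZero n := ⟨by omega⟩
  have e' : Fin n ≃ ZMod n := (Fintype.equivFinOfCardEq (ZMod.card n)).symm
  rw [WP.card_conjClasses_eq_card_Tset, WP.card_Tset e']
end

section
/- Let n, m ≥ 2 be integers. The group presented by generators a_1,…,a_m, b_1,…,b_{m−1} subject to the relations a_i^n = 1, a_i a_j = a_j a_i, b_l a_i = a_{σ_l(i)} b_l (where σ_l is the transposition (l, l+1)), b_l^2 = 1, b_l b_k = b_k b_l for |k−l| ≥ 2, and b_l b_{l+1} b_l = b_{l+1} b_l b_{l+1} for 1 ≤ l ≤ m−2, is isomorphic to the wreath product (Fin m → ZMod n) ⋊ Perm(Fin m), with Perm(Fin m) acting by permuting coordinates. -/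
/-- The inclusion `Fin (m-1) → Fin m`, `l ↦ l`. -/
def idx1 {m : ℕ} (l : Fin (m - 1)) : Fin m := Fin.castLE (Nat.sub_le m 1) l

/-- The inclusion `Fin (m-1) → Fin m`, `l ↦ l + 1`. -/
def idx2 {m : ℕ} (l : Fin (m - 1)) : Fin m := ⟨l.1 + 1, by have := l.isLt; omega⟩

/-- The transposition `σ_l = (l, l+1)` in `Perm (Fin m)`. -/
def sigma {m : ℕ} (l : Fin (m - 1)) : Equiv.Perm (Fin m) := Equiv.swap (idx1 l) (idx2 l)

/-- The free-group generator `a_i`. -/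
def Agen {m : ℕ} (i : Fin m) : FreeGroup (Fin m ⊕ Fin (m - 1)) := FreeGroup.of (Sum.inl i)

/-- The free-group generator `b_l`. -/
def Bgen {m : ℕ} (l : Fin (m - 1)) : FreeGroup (Fin m ⊕ Fin (m - 1)) := FreeGroup.of (Sum.inr l)

/-- The relators of the generalised symmetric group: `a_i^n = 1`, `a_i a_j = a_j a_i`,
`b_l a_i = a_{σ_l(i)} b_l`, `b_l² = 1`, `b_l b_k = b_k b_l` for `|k−l| ≥ 2`, and
`b_l b_{l+1} b_l = b_{l+1} b_l b_{l+1}`. -/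
def wreathRels (n m : ℕ) : Set (FreeGroup (Fin m ⊕ Fin (m - 1))) :=
  {r | (∃ i : Fin m, r = Agen i ^ n) ∨
       (∃ i j : Fin m, r = Agen i * Agen j * (Agen i)⁻¹ * (Agen j)⁻¹) ∨
       (∃ (l : Fin (m - 1)) (i : Fin m),
          r = Bgen l * Agen i * (Bgen l)⁻¹ * (Agen (sigma l i))⁻¹) ∨
       (∃ l : Fin (m - 1), r = Bgen l ^ 2) ∨
       (∃ l t : Fin (m - 1), (t.1 + 2 ≤ l.1 ∨ l.1 + 2 ≤ t.1) ∧
          r = Bgen l * Bgen t * (Bgen l)⁻¹ * (Bgen t)⁻¹) ∨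
       (∃ (l : Fin (m - 1)) (h : l.1 + 1 < m - 1),
          r = Bgen l * Bgen ⟨l.1 + 1, h⟩ * Bgen l *
              (Bgen ⟨l.1 + 1, h⟩ * Bgen l * Bgen ⟨l.1 + 1, h⟩)⁻¹)}


namespace WreathAux

open PresentedGroup

/-- Coxeter-type relators for the symmetric group `S (k+1)` on generators `Fin k`. -/
def coxRels (k : ℕ) : Set (FreeGroup (Fin k)) :=
  {r | (∃ l : Fin k, r = FreeGroup.of l ^ 2) ∨
       (∃ l t : Fin k, (t.1 + 2 ≤ l.1 ∨ l.1 + 2 ≤ t.1) ∧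
          r = FreeGroup.of l * FreeGroup.of t * (FreeGroup.of l)⁻¹ * (FreeGroup.of t)⁻¹) ∨
       (∃ (l : Fin k) (h : l.1 + 1 < k),
          r = FreeGroup.of l * FreeGroup.of ⟨l.1 + 1, h⟩ * FreeGroup.of l *
              (FreeGroup.of ⟨l.1 + 1, h⟩ * FreeGroup.of l * FreeGroup.of ⟨l.1 + 1, h⟩)⁻¹)}

abbrev CoxQ (k : ℕ) := PresentedGroup (coxRels k)

lemma mk_rel {α : Type*} {rels : Set (FreeGroup α)} {r : FreeGroup α} (hr : r ∈ rels) :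
    PresentedGroup.mk rels r = 1 :=
  (QuotientGroup.eq_one_iff r).mpr (Subgroup.subset_normalClosure hr)

lemma cox_sq {k : ℕ} (l : Fin k) : (of l : CoxQ k) * of l = 1 := by
  have := mk_rel (rels := coxRels k) (Or.inl ⟨l, rfl⟩)
  rwa [map_pow, pow_two] at this

lemma cox_inv {k : ℕ} (l : Fin k) : (of l : CoxQ k)⁻¹ = of l :=
  inv_eq_of_mul_eq_one_right (cox_sq l)

lemma comm_of_rel {G : Type*} [Group G] {a b : G} (h : a * b * a⁻¹ * b⁻¹ = 1) : a * b = b * a := by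
  have h1 : a * b * a⁻¹ = b := by
    have := mul_eq_one_iff_eq_inv.mp h; rwa [inv_inv] at this
  rw [mul_inv_eq_iff_eq_mul] at h1
  exact h1

lemma cox_comm {k : ℕ} (l t : Fin k) (h : t.1 + 2 ≤ l.1 ∨ l.1 + 2 ≤ t.1) :
    (of l : CoxQ k) * of t = of t * of l := by
  have := mk_rel (rels := coxRels k) (Or.inr (Or.inl ⟨l, t, h, rfl⟩))
  simp only [map_mul, map_inv] at this
  exact comm_of_rel this

lemma cox_braid {k : ℕ} (l : Fin k) (h : l.1 + 1 < k) :
    (of l : CoxQ k) * of ⟨l.1 + 1, h⟩ * of l = of ⟨l.1 + 1, h⟩ * of l * of ⟨l.1 + 1, h⟩ := by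
  have := mk_rel (rels := coxRels k) (Or.inr (Or.inr ⟨l, h, rfl⟩))
  simp only [map_mul, map_inv] at this
  exact mul_inv_eq_one.mp this


/-- The descending word `g_k g_{k-1} ⋯ g_j` in `CoxQ (k+1)` (equal to `1` for `j ≥ k+1`). -/
def xw (k : ℕ) (j : ℕ) : CoxQ (k + 1) :=
  if h : j < k + 1 then xw k (j + 1) * of ⟨j, h⟩ else 1
  termination_by k + 1 - j

lemma xw_ge {k j : ℕ} (h : k + 1 ≤ j) : xw k j = 1 := by
  rw [xw, dif_neg (by omega)]

lemma xw_lt {k j : ℕ} (h : j < k + 1) : xw k j = xw k (j + 1) * of ⟨j, h⟩ := by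
  rw [xw, dif_pos h]

/-- Far generators commute with the word `xw`. -/
lemma xw_comm {k : ℕ} (i : Fin (k + 1)) :
    ∀ j, i.1 + 2 ≤ j → xw k j * of i = of i * xw k j
  | j, h => by
    by_cases hj : j < k + 1
    · rw [xw_lt hj, mul_assoc, cox_comm ⟨j, hj⟩ i (by simp; omega), ← mul_assoc,
        xw_comm i (j + 1) (by omega), mul_assoc]
    · rw [xw_ge (by omega), one_mul, mul_one]
  termination_by j => k + 1 - j

/-- Sliding a generator through `xw` from the right. -/
lemma xw_swap {k : ℕ} (i : Fin (k + 1)) :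
    ∀ j, j + 1 ≤ i.1 → xw k j * of i = of ⟨i.1 - 1, by omega⟩ * xw k j
  | j, h => by
    have hik : i.1 < k + 1 := i.2
    by_cases hstep : j + 1 < i.1
    · -- step case : far commute then recurse
      rw [xw_lt (by omega), mul_assoc, cox_comm ⟨j, by omega⟩ i (by simp; omega), ← mul_assoc,
        xw_swap i (j + 1) (by omega), mul_assoc]
    · -- base case : j + 1 = i.1, use the braid relation
      have hj1 : j + 1 < k + 1 := by omega
      have hj : j < k + 1 := by omega
      have hieq : of i = (of ⟨j + 1, hj1⟩ : CoxQ (k+1)) := by congr 1; ext; simp; omega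
      have hgoal : (of ⟨i.1 - 1, by omega⟩ : CoxQ (k+1)) = of ⟨j, hj⟩ := by
        congr 1; ext; simp; omega
      rw [hieq, hgoal, xw_lt hj, xw_lt hj1]
      have hbr : (of (⟨j, hj⟩ : Fin (k+1)) : CoxQ (k+1)) * of ⟨j + 1, hj1⟩ *
          of ⟨j, hj⟩ = of ⟨j + 1, hj1⟩ * of ⟨j, hj⟩ * of ⟨j + 1, hj1⟩ := by
        have := cox_braid (⟨j, hj⟩ : Fin (k+1)) (by simpa using hj1)
        simpa using this
      have hc : xw k (j + 2) * of ⟨j, hj⟩ = of ⟨j, hj⟩ * xw k (j + 2) :=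
        xw_comm ⟨j, hj⟩ (j + 2) (by simp)
      calc xw k (j + 2) * of ⟨j + 1, hj1⟩ * of ⟨j, hj⟩ * of ⟨j + 1, hj1⟩
          = xw k (j + 2) * (of ⟨j + 1, hj1⟩ * of ⟨j, hj⟩ * of ⟨j + 1, hj1⟩) := by
            simp [mul_assoc]
        _ = xw k (j + 2) * (of ⟨j, hj⟩ * of ⟨j + 1, hj1⟩ * of ⟨j, hj⟩) := by
            rw [← hbr]
        _ = (xw k (j + 2) * of ⟨j, hj⟩) * (of ⟨j + 1, hj1⟩ * of ⟨j, hj⟩) := by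
            simp [mul_assoc]
        _ = of ⟨j, hj⟩ * (xw k (j + 2) * of ⟨j + 1, hj1⟩ * of ⟨j, hj⟩) := by
            rw [hc]; simp [mul_assoc]
  termination_by j => i.1 - j

/-- The inclusion `CoxQ k →* CoxQ (k+1)`. -/
def coxIncl (k : ℕ) : CoxQ k →* CoxQ (k + 1) :=
  PresentedGroup.toGroup (f := fun l => (of ⟨l.1, by omega⟩ : CoxQ (k + 1))) (by
    rintro r (⟨l, rfl⟩ | ⟨l, t, ht, rfl⟩ | ⟨l, h, rfl⟩)
    · rw [map_pow, FreeGroup.lift_apply_of, pow_two]; exact cox_sq _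
    · simp only [map_mul, map_inv, FreeGroup.lift_apply_of]
      have := cox_comm (⟨l.1, by omega⟩ : Fin (k+1)) ⟨t.1, by omega⟩ (by simpa using ht)
      rw [this]; group
    · simp only [map_mul, map_inv, FreeGroup.lift_apply_of]
      have := cox_braid (⟨l.1, by omega⟩ : Fin (k+1)) (by simpa using Nat.lt_succ_of_lt h)
      have h2 : (⟨(⟨l.1, by omega⟩ : Fin (k+1)).1 + 1, _⟩ : Fin (k+1)) = ⟨l.1 + 1, by omega⟩ :=
        rfl
      rw [h2] at this
      rw [this]; group)

lemma coxIncl_of {k : ℕ} (l : Fin k) :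
    coxIncl k (of l) = (of ⟨l.1, by omega⟩ : CoxQ (k + 1)) :=
  PresentedGroup.toGroup.of _

/-- Every element of `CoxQ (k+1)` lies in one of the `k+2` cosets `(coxIncl k).range * xw k j`. -/
lemma submonoid_closure_eq_top {G : Type*} [Group G] {S : Set G}
    (h : Subgroup.closure S = ⊤) (hinv : S⁻¹ ⊆ ↑(Submonoid.closure S)) :
    Submonoid.closure S = ⊤ := by
  have h2 := Subgroup.closure_toSubmonoid S
  rw [h] at h2
  have hle : Submonoid.closure (S ∪ S⁻¹) ≤ Submonoid.closure S :=
    Submonoid.closure_le.mpr (Set.union_subset Submonoid.subset_closure hinv)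
  rw [eq_top_iff]
  intro x _
  have hx : x ∈ (⊤ : Subgroup G).toSubmonoid := trivial
  rw [h2] at hx
  exact hle hx

lemma cox_mem_top {k : ℕ} (q : CoxQ k) :
    q ∈ Submonoid.closure (Set.range (of : Fin k → CoxQ k)) := by
  have : Submonoid.closure (Set.range (of : Fin k → CoxQ k)) = ⊤ := by
    apply submonoid_closure_eq_top (PresentedGroup.closure_range_of _)
    rintro x hx
    obtain ⟨l, hl⟩ := hx
    have : x = of l := by rw [← inv_inv x, ← hl, cox_inv]
    rw [this]
    exact Submonoid.subset_closure ⟨l, rfl⟩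
  rw [this]; trivial

lemma cox_cover (k : ℕ) (q : CoxQ (k + 1)) :
    ∃ (p : CoxQ k) (j : ℕ), j ≤ k + 1 ∧ q = coxIncl k p * xw k j := by
  have main : ∀ x ∈ Submonoid.closure (Set.range (of : Fin (k+1) → CoxQ (k+1))),
      ∀ y : CoxQ (k+1), (∃ (p : CoxQ k) (j : ℕ), j ≤ k + 1 ∧ y = coxIncl k p * xw k j) →
      ∃ (p : CoxQ k) (j : ℕ), j ≤ k + 1 ∧ y * x = coxIncl k p * xw k j := by
    intro x hx
    induction hx using Submonoid.closure_induction with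
    | one => intro y hy; simpa using hy
    | mul a b _ _ iha ihb =>
      intro y hy
      rw [← mul_assoc]
      exact ihb _ (iha _ hy)
    | mem x hx =>
      obtain ⟨i, rfl⟩ := hx
      rintro y ⟨p, j, hj, rfl⟩
      rcases Nat.lt_or_ge (i.1 + 1) j with hc | hc
      · -- far commute : i.1 + 2 ≤ j
        have hik : i.1 < k := by omega
        refine ⟨p * of ⟨i.1, hik⟩, j, hj, ?_⟩
        rw [mul_assoc, xw_comm i j (by omega), map_mul, coxIncl_of]
        have : (of ⟨(⟨i.1, hik⟩ : Fin k).1, by omega⟩ : CoxQ (k+1)) = of i := by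
          congr 1
        rw [this, mul_assoc]
      rcases Nat.lt_or_ge j i.1 with hc2 | hc2
      · -- slide : j + 1 ≤ i.1
        have hik : i.1 - 1 < k := by have := i.2; omega
        refine ⟨p * of ⟨i.1 - 1, hik⟩, j, hj, ?_⟩
        rw [mul_assoc, xw_swap i j (by omega), map_mul, coxIncl_of]
        have : (of ⟨(⟨i.1 - 1, hik⟩ : Fin k).1, by omega⟩ : CoxQ (k+1)) =
            of ⟨i.1 - 1, by omega⟩ := by congr 1
        rw [this, mul_assoc]
      rcases Nat.lt_or_ge i.1 j with hc3 | hc3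
      · -- absorb : i.1 + 1 = j
        have hij : i.1 < k + 1 := i.2
        refine ⟨p, i.1, by omega, ?_⟩
        rw [xw_lt hij]
        have hji : j = i.1 + 1 := by omega
        subst hji
        rw [Fin.eta, mul_assoc]
      · -- cancel : i.1 = j
        have hji : j = i.1 := by omega
        subst hji
        have hik : i.1 < k + 1 := i.2
        refine ⟨p, i.1 + 1, by omega, ?_⟩
        rw [xw_lt hik, Fin.eta, mul_assoc, mul_assoc, cox_sq, mul_one]
  have := main q (cox_mem_top q) 1 ⟨1, k + 1, le_refl _, by simp [xw_ge]⟩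
  simpa using this


lemma cox_finite_card : ∀ k : ℕ, Finite (CoxQ k) ∧ Nat.card (CoxQ k) ≤ Nat.factorial (k + 1) := by
  intro k
  induction k with
  | zero =>
    have h1 : ∀ q : CoxQ 0, q = 1 := by
      intro q
      have h := PresentedGroup.closure_range_of (coxRels 0)
      rw [Set.range_eq_empty, Subgroup.closure_empty] at h
      have : q ∈ (⊥ : Subgroup (CoxQ 0)) := h ▸ Subgroup.mem_top q
      simpa using this
    have hs : Subsingleton (CoxQ 0) := ⟨fun a b => by rw [h1 a, h1 b]⟩
    refine ⟨Finite.of_subsingleton, ?_⟩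
    have : Nat.card (CoxQ 0) = 1 := Nat.card_eq_one_iff_unique.mpr ⟨hs, ⟨1⟩⟩
    simp [this, Nat.factorial]
  | succ k ih =>
    obtain ⟨hF, hc⟩ := ih
    have hs : Function.Surjective
        (fun pj : CoxQ k × Fin (k + 2) => coxIncl k pj.1 * xw k pj.2.1) := by
      intro q
      obtain ⟨p, j, hj, rfl⟩ := cox_cover k q
      exact ⟨(p, ⟨j, by omega⟩), rfl⟩
    refine ⟨Finite.of_surjective _ hs, ?_⟩
    have h2 := Nat.card_le_card_of_surjective _ hs
    have h3 : Nat.card (CoxQ k × Fin (k + 2)) = Nat.card (CoxQ k) * (k + 2) := by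
      simp [Nat.card_prod]
    rw [h3] at h2
    calc Nat.card (CoxQ (k + 1)) ≤ Nat.card (CoxQ k) * (k + 2) := h2
      _ ≤ Nat.factorial (k + 1) * (k + 2) := Nat.mul_le_mul_right _ hc
      _ = Nat.factorial (k + 2) := by
          rw [show Nat.factorial (k + 2) = (k + 2) * Nat.factorial (k + 1) from
            Nat.factorial_succ (k + 1), Nat.mul_comm]

section Swaps

variable {α : Type*} [DecidableEq α]

lemma swap_commute (a b c d : α) (hac : a ≠ c) (had : a ≠ d) (hbc : b ≠ c) (hbd : b ≠ d) :
    Equiv.swap a b * Equiv.swap c d = Equiv.swap c d * Equiv.swap a b := by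
  ext x
  simp only [Equiv.Perm.mul_apply, Equiv.swap_apply_def]
  split_ifs <;> simp_all

lemma swap_braid (a b c : α) (hab : a ≠ b) (hbc : b ≠ c) (hac : a ≠ c) :
    Equiv.swap a b * Equiv.swap b c * Equiv.swap a b =
      Equiv.swap b c * Equiv.swap a b * Equiv.swap b c :=
  calc Equiv.swap a b * Equiv.swap b c * Equiv.swap a b
      = Equiv.swap b a * Equiv.swap c b * Equiv.swap b a := by
        rw [Equiv.swap_comm a b, Equiv.swap_comm b c]
    _ = Equiv.swap a c := Equiv.swap_mul_swap_mul_swap hbc.symm (Ne.symm hac)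
    _ = Equiv.swap c a := Equiv.swap_comm a c
    _ = Equiv.swap b c * Equiv.swap a b * Equiv.swap b c :=
        (Equiv.swap_mul_swap_mul_swap hab hac).symm

end Swaps

/-- The representation of `CoxQ k` by permutations, sending `l` to `swap l (l+1)`. -/
def coxPerm (k : ℕ) : CoxQ k →* Equiv.Perm (Fin (k + 1)) :=
  PresentedGroup.toGroup
    (f := fun l => Equiv.swap (⟨l.1, by omega⟩ : Fin (k + 1)) ⟨l.1 + 1, by omega⟩) (by
    rintro r (⟨l, rfl⟩ | ⟨l, t, ht, rfl⟩ | ⟨l, h, rfl⟩)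
    · rw [map_pow, FreeGroup.lift_apply_of, pow_two, Equiv.swap_mul_self]
    · simp only [map_mul, map_inv, FreeGroup.lift_apply_of]
      rw [swap_commute _ _ _ _ (by simp [Fin.ext_iff]; omega) (by simp [Fin.ext_iff]; omega)
        (by simp [Fin.ext_iff]; omega) (by simp [Fin.ext_iff]; omega)]
      group
    · simp only [map_mul, map_inv, FreeGroup.lift_apply_of]
      have h2 : (⟨(⟨l.1 + 1, h⟩ : Fin k).1, Nat.lt_succ_of_lt (Fin.is_lt _)⟩ : Fin (k + 1)) =
          ⟨l.1 + 1, by omega⟩ := rfl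
      have h3 : (⟨(⟨l.1 + 1, h⟩ : Fin k).1 + 1, Nat.succ_lt_succ (Fin.is_lt _)⟩ : Fin (k + 1)) =
          ⟨l.1 + 2, by omega⟩ := rfl
      rw [h2, h3]
      have hb := swap_braid (⟨l.1, by omega⟩ : Fin (k + 1)) ⟨l.1 + 1, by omega⟩
        ⟨l.1 + 2, by omega⟩ (by simp [Fin.ext_iff]) (by simp [Fin.ext_iff]) (by simp [Fin.ext_iff])
      rw [hb]
      group)

lemma coxPerm_of {k : ℕ} (l : Fin k) :
    coxPerm k (of l) = Equiv.swap (⟨l.1, by omega⟩ : Fin (k + 1)) ⟨l.1 + 1, by omega⟩ :=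
  PresentedGroup.toGroup.of _


section Main

variable {n k : ℕ}

/-- `a_i` in the presented group. -/
def Ag (n k : ℕ) (i : Fin (k + 1)) : PresentedGroup (wreathRels n (k + 1)) :=
  PresentedGroup.of (Sum.inl i)

/-- `b_l` in the presented group. -/
def Bg (n k : ℕ) (l : Fin k) : PresentedGroup (wreathRels n (k + 1)) :=
  PresentedGroup.of (Sum.inr l)

/-- The generator `δ_i` of the base group. -/
def delta (n : ℕ) {m : ℕ} (i : Fin m) : BaseGrp n m :=
  Multiplicative.ofAdd (Pi.single i (1 : ZMod n))

lemma relA_pow (i : Fin (k + 1)) : Ag n k i ^ n = 1 := by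
  have := mk_rel (rels := wreathRels n (k + 1)) (Or.inl ⟨i, rfl⟩)
  rwa [map_pow] at this

lemma relA_comm (i j : Fin (k + 1)) : Ag n k i * Ag n k j = Ag n k j * Ag n k i := by
  have := mk_rel (rels := wreathRels n (k + 1)) (Or.inr (Or.inl ⟨i, j, rfl⟩))
  simp only [map_mul, map_inv] at this
  exact comm_of_rel this

lemma relBA (l : Fin k) (i : Fin (k + 1)) :
    Bg n k l * Ag n k i * (Bg n k l)⁻¹ = Ag n k (sigma (m := k + 1) l i) := by
  have := mk_rel (rels := wreathRels n (k + 1)) (Or.inr (Or.inr (Or.inl ⟨l, i, rfl⟩)))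
  simp only [map_mul, map_inv] at this
  exact mul_inv_eq_one.mp this

lemma relB_sq (l : Fin k) : Bg n k l * Bg n k l = 1 := by
  have := mk_rel (rels := wreathRels n (k + 1)) (Or.inr (Or.inr (Or.inr (Or.inl ⟨l, rfl⟩))))
  rwa [map_pow, pow_two] at this

lemma relB_inv (l : Fin k) : (Bg n k l)⁻¹ = Bg n k l :=
  inv_eq_of_mul_eq_one_right (relB_sq l)

lemma relB_comm (l t : Fin k) (h : t.1 + 2 ≤ l.1 ∨ l.1 + 2 ≤ t.1) :
    Bg n k l * Bg n k t = Bg n k t * Bg n k l := by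
  have := mk_rel (rels := wreathRels n (k + 1))
    (Or.inr (Or.inr (Or.inr (Or.inr (Or.inl ⟨l, t, h, rfl⟩)))))
  simp only [map_mul, map_inv] at this
  exact comm_of_rel this

lemma relB_braid (l : Fin k) (h : l.1 + 1 < k) :
    Bg n k l * Bg n k ⟨l.1 + 1, h⟩ * Bg n k l =
      Bg n k ⟨l.1 + 1, h⟩ * Bg n k l * Bg n k ⟨l.1 + 1, h⟩ := by
  have := mk_rel (rels := wreathRels n (k + 1))
    (Or.inr (Or.inr (Or.inr (Or.inr (Or.inr ⟨l, h, rfl⟩)))))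
  simp only [map_mul, map_inv] at this
  exact mul_inv_eq_one.mp this

/-- The homomorphism `CoxQ k →* PresentedGroup (wreathRels n (k+1))`, `b_l ↦ B_l`. -/
def psiB (n k : ℕ) : CoxQ k →* PresentedGroup (wreathRels n (k + 1)) :=
  PresentedGroup.toGroup (f := fun l => Bg n k l) (by
    rintro r (⟨l, rfl⟩ | ⟨l, t, ht, rfl⟩ | ⟨l, h, rfl⟩)
    · rw [map_pow, FreeGroup.lift_apply_of, pow_two]; exact relB_sq l
    · simp only [map_mul, map_inv, FreeGroup.lift_apply_of]
      rw [relB_comm l t ht]; group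
    · simp only [map_mul, map_inv, FreeGroup.lift_apply_of]
      rw [relB_braid l h]; group)

lemma psiB_of (l : Fin k) : psiB n k (of l) = Bg n k l :=
  PresentedGroup.toGroup.of _

lemma sigma_eq_coxPerm (l : Fin k) :
    (sigma l : Equiv.Perm (Fin (k + 1))) =
      Equiv.swap (⟨l.1, by omega⟩ : Fin (k + 1)) ⟨l.1 + 1, by omega⟩ := by
  unfold sigma idx1 idx2
  congr 1

/-- Conjugation of the `a`-generators by `b`-words. -/
lemma psiB_conj (q : CoxQ k) :
    ∀ i : Fin (k + 1), psiB n k q * Ag n k i * (psiB n k q)⁻¹ = Ag n k (coxPerm k q i) := by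
  let H : Subgroup (CoxQ k) :=
    { carrier := {q | ∀ i : Fin (k + 1),
        psiB n k q * Ag n k i * (psiB n k q)⁻¹ = Ag n k (coxPerm k q i)}
      one_mem' := by intro i; simp
      mul_mem' := by
        intro a b ha hb i
        simp only [map_mul, mul_inv_rev, Equiv.Perm.mul_apply]
        calc psiB n k a * psiB n k b * Ag n k i * ((psiB n k b)⁻¹ * (psiB n k a)⁻¹)
            = psiB n k a * (psiB n k b * Ag n k i * (psiB n k b)⁻¹) * (psiB n k a)⁻¹ := by
              group
          _ = psiB n k a * Ag n k (coxPerm k b i) * (psiB n k a)⁻¹ := by rw [hb i]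
          _ = Ag n k (coxPerm k a (coxPerm k b i)) := ha _
      inv_mem' := by
        intro a ha i
        have h2 := ha ((coxPerm k a)⁻¹ i)
        have h3 : Ag n k (coxPerm k a ((coxPerm k a)⁻¹ i)) = Ag n k i := by
          rw [Equiv.Perm.inv_def, Equiv.apply_symm_apply]
        rw [h3] at h2
        rw [map_inv, inv_inv, ← h2]
        have h4 : coxPerm k a⁻¹ i = (coxPerm k a)⁻¹ i := by rw [map_inv]
        rw [h4]
        group }
  have hq : q ∈ H := by
    apply PresentedGroup.generated_by
    intro l i
    rw [psiB_of, relB_inv, coxPerm_of, ← sigma_eq_coxPerm]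
    have := relBA (n := n) l i
    rwa [relB_inv] at this
  exact hq

lemma permAut_apply {m : ℕ} (σ : Equiv.Perm (Fin m)) (x : BaseGrp n m) :
    (permAut n m σ) x =
      Multiplicative.ofAdd (fun j => Multiplicative.toAdd x (σ⁻¹ j)) := rfl

lemma permAut_delta {m : ℕ} (σ : Equiv.Perm (Fin m)) (i : Fin m) :
    (permAut n m σ) (delta n i) = delta n (σ i) := by
  rw [permAut_apply]
  unfold delta
  congr 1
  funext j
  simp only [toAdd_ofAdd]
  by_cases h : j = σ i
  · subst h; rw [Equiv.Perm.inv_def, Equiv.symm_apply_apply, Pi.single_eq_same, Pi.single_eq_same]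
  · have h2 : σ⁻¹ j ≠ i := fun hc => h (by rw [← hc, Equiv.Perm.inv_def, Equiv.apply_symm_apply])
    rw [Pi.single_eq_of_ne h2, Pi.single_eq_of_ne h]

lemma delta_pow_n {m : ℕ} (i : Fin m) : (delta n i) ^ n = 1 := by
  unfold delta
  rw [← ofAdd_nsmul]
  have h : n • (Pi.single i (1 : ZMod n) : Fin m → ZMod n) = 0 := by
    funext j
    by_cases h : j = i
    · subst h; simp [Pi.single_eq_same, nsmul_eq_mul, ZMod.natCast_self]
    · simp [Pi.single_eq_of_ne h]
  rw [h]; rfl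

lemma sigma_mk_succ (l : Fin k) (h : l.1 + 1 < k) :
    (sigma (⟨l.1 + 1, h⟩ : Fin k) : Equiv.Perm (Fin (k + 1))) =
      Equiv.swap (⟨l.1 + 1, by omega⟩ : Fin (k + 1)) ⟨l.1 + 2, by omega⟩ := by
  rw [sigma_eq_coxPerm]

/-- The homomorphism from the presented group to the wreath product. -/
def toW (n k : ℕ) (hn : 2 ≤ n) :
    PresentedGroup (wreathRels n (k + 1)) →* WreathProd n (k + 1) :=
  PresentedGroup.toGroup (f := fun x =>
    Sum.elim
      (fun i : Fin (k + 1) => SemidirectProduct.inl (delta n i))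
      (fun l : Fin k => SemidirectProduct.inr (sigma (m := k + 1) l)) x) (by
    rintro r (⟨i, rfl⟩ | ⟨i, j, rfl⟩ | ⟨l, i, rfl⟩ | ⟨l, rfl⟩ | ⟨l, t, ht, rfl⟩ | ⟨l, h, rfl⟩) <;>
      simp only [Agen, Bgen, map_mul, map_inv, map_pow, FreeGroup.lift_apply_of, Sum.elim_inl,
        Sum.elim_inr]
    · rw [← map_pow, delta_pow_n, map_one]
    · simp only [← map_inv, ← map_mul]
      have hc : delta n i * delta n j * (delta n i)⁻¹ * (delta n j)⁻¹ =
          (1 : BaseGrp n (k + 1)) := by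
        rw [mul_comm (delta n i) (delta n j)]; group
      rw [hc, map_one]
    · simp only [← map_inv]
      rw [← SemidirectProduct.inl_aut, permAut_delta, ← map_mul]
      have hc : delta n ((sigma l) i) * (delta n ((sigma l) i))⁻¹ =
          (1 : BaseGrp n (k + 1)) := mul_inv_cancel _
      rw [hc, map_one]
    · rw [← map_pow, pow_two]
      have hc : (sigma l : Equiv.Perm (Fin (k + 1))) * sigma l = 1 := by
        rw [sigma_eq_coxPerm l, Equiv.swap_mul_self]
      rw [hc, map_one]
    · simp only [← map_inv, ← map_mul]
      have hcomm : (sigma l : Equiv.Perm (Fin (k + 1))) * sigma t = sigma t * sigma l := by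
        rw [sigma_eq_coxPerm l, sigma_eq_coxPerm t]
        exact swap_commute _ _ _ _ (by simp [Fin.ext_iff]; omega) (by simp [Fin.ext_iff]; omega)
          (by simp [Fin.ext_iff]; omega) (by simp [Fin.ext_iff]; omega)
      have hc : (sigma l : Equiv.Perm (Fin (k + 1))) * sigma t * (sigma l)⁻¹ * (sigma t)⁻¹ =
          1 := by rw [hcomm]; group
      rw [hc, map_one]
    · simp only [← map_inv, ← map_mul]
      have hbr : (sigma l : Equiv.Perm (Fin (k + 1))) * sigma ⟨l.1 + 1, h⟩ * sigma l =
          sigma ⟨l.1 + 1, h⟩ * sigma l * sigma ⟨l.1 + 1, h⟩ := by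
        rw [sigma_eq_coxPerm l, sigma_mk_succ l h]
        exact swap_braid _ _ _ (by simp [Fin.ext_iff]) (by simp [Fin.ext_iff])
          (by simp [Fin.ext_iff])
      have hc : (sigma l : Equiv.Perm (Fin (k + 1))) * sigma ⟨l.1 + 1, h⟩ * sigma l *
          (sigma ⟨l.1 + 1, h⟩ * sigma l * sigma ⟨l.1 + 1, h⟩)⁻¹ = 1 := mul_inv_eq_one.mpr hbr
      rw [hc, map_one])

variable (hn : 2 ≤ n)
include hn

lemma toW_of_inl (i : Fin (k + 1)) :
    toW n k hn (Ag n k i) = SemidirectProduct.inl (delta n i) :=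
  PresentedGroup.toGroup.of _

lemma toW_of_inr (l : Fin k) :
    toW n k hn (Bg n k l) = SemidirectProduct.inr (sigma (m := k + 1) l) :=
  PresentedGroup.toGroup.of _

/-- Powers of a generator of order dividing `n`, as a hom from `Multiplicative (ZMod n)`. -/
def powHom {G : Type*} [Group G] (g : G) (hg : g ^ n = 1) : Multiplicative (ZMod n) →* G where
  toFun x := g ^ (Multiplicative.toAdd x).val
  map_one' := by
    haveI : NeZero n := ⟨by omega⟩
    show g ^ (0 : ZMod n).val = 1
    rw [ZMod.val_zero, pow_zero]
  map_mul' x y := by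
    haveI : NeZero n := ⟨by omega⟩
    show g ^ ((Multiplicative.toAdd x) + (Multiplicative.toAdd y)).val = _
    rw [ZMod.val_add, ← pow_eq_pow_mod _ hg, pow_add]

lemma powHom_commute {G : Type*} [Group G] {g h : G} (hg : g ^ n = 1) (hh : h ^ n = 1)
    (hc : g * h = h * g) (x y : Multiplicative (ZMod n)) :
    Commute (powHom hn g hg x) (powHom hn h hh y) :=
  Commute.pow_pow hc _ _

/-- The homomorphism `BaseGrp n (k+1) →* PresentedGroup (wreathRels n (k+1))`. -/
def AH (n k : ℕ) (hn : 2 ≤ n) : BaseGrp n (k + 1) →* PresentedGroup (wreathRels n (k + 1)) :=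
  (MonoidHom.noncommPiCoprod (fun i : Fin (k + 1) => powHom hn (Ag n k i) (relA_pow i))
    (fun i j _ x y => powHom_commute hn _ _ (relA_comm i j) x y)).comp
    (MulEquiv.piMultiplicative (fun _ : Fin (k + 1) => ZMod n)).toMonoidHom

lemma AH_delta (i : Fin (k + 1)) : AH n k hn (delta n i) = Ag n k i := by
  haveI : NeZero n := ⟨by omega⟩
  have h1 : (MulEquiv.piMultiplicative (fun _ : Fin (k + 1) => ZMod n)) (delta n i) =
      Pi.mulSingle i (Multiplicative.ofAdd (1 : ZMod n)) := by
    funext j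
    by_cases h : j = i
    · subst h; simp [MulEquiv.piMultiplicative, delta]
    · simp [MulEquiv.piMultiplicative, delta, Pi.single_eq_of_ne h, Pi.mulSingle_eq_of_ne h]
  show (MonoidHom.noncommPiCoprod (fun i : Fin (k + 1) => powHom hn (Ag n k i) (relA_pow i))
      (fun i j _ x y => powHom_commute hn _ _ (relA_comm i j) x y))
    ((MulEquiv.piMultiplicative (fun _ : Fin (k + 1) => ZMod n)) (delta n i)) = Ag n k i
  rw [h1]; refine (MonoidHom.noncommPiCoprod_mulSingle _ i _).trans ?_
  show Ag n k i ^ (1 : ZMod n).val = Ag n k i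
  rw [ZMod.val_one_eq_one_mod, Nat.mod_eq_of_lt (by omega), pow_one]

lemma base_decomp (a : BaseGrp n (k + 1)) :
    a = ∏ i : Fin (k + 1), (delta n i) ^ ((Multiplicative.toAdd a) i).val := by
  haveI : NeZero n := ⟨by omega⟩
  have h2 : ∑ i : Fin (k + 1),
      ((Multiplicative.toAdd a) i).val • (Pi.single i (1 : ZMod n) : Fin (k + 1) → ZMod n) =
      Multiplicative.toAdd a := by
    funext j
    rw [Finset.sum_apply]
    rw [Finset.sum_eq_single j]
    · simp only [Pi.smul_apply, Pi.single_eq_same, nsmul_eq_mul, mul_one]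
      exact ZMod.natCast_rightInverse _
    · intro b _ hb
      simp [Pi.single_eq_of_ne (Ne.symm hb)]
    · intro hj; exact absurd (Finset.mem_univ j) hj
  calc a = Multiplicative.ofAdd (Multiplicative.toAdd a) := rfl
    _ = Multiplicative.ofAdd (∑ i : Fin (k + 1),
        ((Multiplicative.toAdd a) i).val • (Pi.single i (1 : ZMod n) : Fin (k + 1) → ZMod n)) := by
          rw [h2]
    _ = ∏ i : Fin (k + 1), (delta n i) ^ ((Multiplicative.toAdd a) i).val := by
          rw [ofAdd_sum]
          exact Finset.prod_congr rfl fun i _ => by rw [ofAdd_nsmul]; rfl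

lemma toW_surjective : Function.Surjective (toW n k hn) := by
  have hinl : ∀ a : BaseGrp n (k + 1),
      (SemidirectProduct.inl a : WreathProd n (k + 1)) ∈ (toW n k hn).range := by
    intro a
    have hK : a ∈ Subgroup.comap (SemidirectProduct.inl :
        BaseGrp n (k + 1) →* WreathProd n (k + 1)) (toW n k hn).range := by
      rw [base_decomp hn a]
      apply Subgroup.prod_mem
      intro i _
      apply Subgroup.pow_mem
      exact Subgroup.mem_comap.mpr (MonoidHom.mem_range.mpr ⟨Ag n k i, toW_of_inl hn i⟩)
    exact Subgroup.mem_comap.mp hK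
  have hinr : ∀ σ : Equiv.Perm (Fin (k + 1)),
      (SemidirectProduct.inr σ : WreathProd n (k + 1)) ∈ (toW n k hn).range := by
    intro σ
    have hσ : σ ∈ Submonoid.closure
        (Set.range fun i : Fin k => Equiv.swap i.castSucc i.succ) := by
      rw [Equiv.Perm.mclosure_swap_castSucc_succ k]; trivial
    induction hσ using Submonoid.closure_induction with
    | one => rw [map_one]; exact one_mem _
    | mul a b _ _ iha ihb => rw [map_mul]; exact mul_mem iha ihb
    | mem x hx =>
      obtain ⟨l, rfl⟩ := hx
      have h : Equiv.swap (Fin.castSucc l) (Fin.succ l) = sigma (m := k + 1) l := by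
        rw [sigma_eq_coxPerm]
        congr 1 <;> ext <;> simp
      show SemidirectProduct.inr (Equiv.swap (Fin.castSucc l) (Fin.succ l)) ∈ _
      rw [h]
      exact MonoidHom.mem_range.mpr ⟨Bg n k l, toW_of_inr hn l⟩
  intro w
  rw [← SemidirectProduct.inl_left_mul_inr_right w]
  exact mul_mem (hinl w.left) (hinr w.right)

/-- Every element of the presented group is of the form `AH a * psiB p`. -/
lemma wp_cover (q : PresentedGroup (wreathRels n (k + 1))) :
    ∃ (a : BaseGrp n (k + 1)) (p : CoxQ k), q = AH n k hn a * psiB n k p := by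
  have htop : Submonoid.closure
      (Set.range (of : Fin (k + 1) ⊕ Fin k → PresentedGroup (wreathRels n (k + 1)))) = ⊤ := by
    apply submonoid_closure_eq_top (PresentedGroup.closure_range_of _)
    rintro x hx
    obtain ⟨z, hz⟩ := hx
    rcases z with i | l
    · have hxe : x = (Ag n k i)⁻¹ := by rw [← inv_inv x, ← hz]; rfl
      have h : (Ag n k i)⁻¹ = Ag n k i ^ (n - 1) := by
        apply inv_eq_of_mul_eq_one_right
        rw [← pow_succ']
        have he : n - 1 + 1 = n := by omega
        rw [he, relA_pow]
      have hmem : Ag n k i ∈ Submonoid.closure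
          (Set.range (of : Fin (k + 1) ⊕ Fin k → PresentedGroup (wreathRels n (k + 1)))) :=
        Submonoid.subset_closure (Set.mem_range_self (Sum.inl i))
      rw [hxe, h]
      exact Submonoid.pow_mem _ hmem _
    · have hxe : x = (Bg n k l)⁻¹ := by rw [← inv_inv x, ← hz]; rfl
      rw [hxe, relB_inv]
      exact Submonoid.subset_closure (Set.mem_range_self (Sum.inr l))
  have main : ∀ x ∈ Submonoid.closure
      (Set.range (of : Fin (k + 1) ⊕ Fin k → PresentedGroup (wreathRels n (k + 1)))),
      ∀ y, (∃ (a : BaseGrp n (k + 1)) (p : CoxQ k), y = AH n k hn a * psiB n k p) →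
        ∃ (a : BaseGrp n (k + 1)) (p : CoxQ k), y * x = AH n k hn a * psiB n k p := by
    intro x hx
    induction hx using Submonoid.closure_induction with
    | one => intro y hy; simpa using hy
    | mul a b _ _ iha ihb =>
      intro y hy
      rw [← mul_assoc]
      exact ihb _ (iha _ hy)
    | mem x hx =>
      obtain ⟨z, rfl⟩ := hx
      rintro y ⟨a, p, rfl⟩
      rcases z with i | l
      · refine ⟨a * delta n (coxPerm k p i), p, ?_⟩
        have hof : (of (Sum.inl i) : PresentedGroup (wreathRels n (k + 1))) = Ag n k i := rfl
        rw [hof, map_mul, AH_delta hn]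
        calc AH n k hn a * psiB n k p * Ag n k i
            = AH n k hn a * (psiB n k p * Ag n k i * (psiB n k p)⁻¹) * psiB n k p := by group
          _ = AH n k hn a * Ag n k (coxPerm k p i) * psiB n k p := by rw [psiB_conj p i]
          _ = AH n k hn a * Ag n k (coxPerm k p i) * psiB n k p := rfl
      · refine ⟨a, p * of l, ?_⟩
        have hof : (of (Sum.inr l) : PresentedGroup (wreathRels n (k + 1))) = Bg n k l := rfl
        rw [hof, map_mul, psiB_of, mul_assoc]
  have hfin := main q (htop ▸ Submonoid.mem_top q) 1 ⟨1, 1, by simp⟩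
  simpa using hfin

/-- The semidirect product is equivalent (as a type) to the product. -/
def sdpEquiv {N G : Type*} [Group N] [Group G] (φ : G →* MulAut N) :
    SemidirectProduct N G φ ≃ N × G where
  toFun x := (x.left, x.right)
  invFun p := ⟨p.1, p.2⟩
  left_inv x := by cases x; rfl
  right_inv p := rfl

end Main

end WreathAux

/-- The group presented by generators `a_1,…,a_m, b_1,…,b_{m−1}` and the
relations above is isomorphic to the wreath product `(Fin m → ZMod n) ⋊ Perm (Fin m)`. -/
theorem presentedGroup_iso_wreathProd (n m : ℕ) (hn : 2 ≤ n) (hm : 2 ≤ m) :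
    Nonempty (PresentedGroup (wreathRels n m) ≃* WreathProd n m) := by
  obtain ⟨k, rfl⟩ : ∃ k, m = k + 1 := ⟨m - 1, by omega⟩
  haveI : NeZero n := ⟨by omega⟩
  set φ := WreathAux.toW n k hn with hφ
  have hsurj : Function.Surjective φ := WreathAux.toW_surjective (n := n) (k := k) hn
  haveI hfc : Finite (WreathAux.CoxQ k) := (WreathAux.cox_finite_card k).1
  haveI : Finite (BaseGrp n (k + 1)) :=
    Finite.of_equiv _ (Multiplicative.toAdd (α := Fin (k + 1) → ZMod n)).symm
  have hsfun : Function.Surjective (fun ap : BaseGrp n (k + 1) × WreathAux.CoxQ k =>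
      WreathAux.AH n k hn ap.1 * WreathAux.psiB n k ap.2) := by
    intro q
    obtain ⟨a, p, hq⟩ := WreathAux.wp_cover hn q
    exact ⟨(a, p), hq.symm⟩
  haveI : Finite (PresentedGroup (wreathRels n (k + 1))) := Finite.of_surjective _ hsfun
  have hbase : Nat.card (BaseGrp n (k + 1)) = n ^ (k + 1) := by
    rw [Nat.card_congr (Multiplicative.toAdd (α := Fin (k + 1) → ZMod n)),
      Nat.card_fun, Nat.card_zmod, Nat.card_eq_fintype_card, Fintype.card_fin]
  have hcard1 : Nat.card (PresentedGroup (wreathRels n (k + 1))) ≤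
      Nat.card (BaseGrp n (k + 1)) * Nat.card (WreathAux.CoxQ k) := by
    have h := Nat.card_le_card_of_surjective _ hsfun
    rwa [Nat.card_prod] at h
  have hW : Nat.card (WreathProd n (k + 1)) = n ^ (k + 1) * Nat.factorial (k + 1) := by
    rw [Nat.card_congr (WreathAux.sdpEquiv _), Nat.card_prod, hbase,
      Nat.card_eq_fintype_card, Fintype.card_perm, Fintype.card_fin]
  have hle : Nat.card (PresentedGroup (wreathRels n (k + 1))) ≤
      Nat.card (WreathProd n (k + 1)) := by
    rw [hW]
    calc Nat.card (PresentedGroup (wreathRels n (k + 1)))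
        ≤ Nat.card (BaseGrp n (k + 1)) * Nat.card (WreathAux.CoxQ k) := hcard1
      _ ≤ n ^ (k + 1) * Nat.factorial (k + 1) := by
          rw [hbase]
          exact Nat.mul_le_mul_left _ (WreathAux.cox_finite_card k).2
  have hbij : Function.Bijective φ :=
    (Nat.bijective_iff_surjective_and_card φ).mpr ⟨hsurj,
      le_antisymm hle (Nat.card_le_card_of_surjective φ hsurj)⟩
  exact ⟨MulEquiv.ofBijective φ hbij⟩
end

section
/- Let k be an algebraically closed field of characteristic zero, n, m ≥ 2 integers, ζ ∈ k a primitive 2n-th root of unity, and q = ζ². In the group algebra k[A] of A = (Fin m → ZMod n), define Λ_λ = n^{−m} ∑_{i ∈ A} q^{λ·i} x^i for λ ∈ A, and for a fixed l with 1 ≤ l ≤ m−1 set y_l = ∑_{λ ∈ A} ζ^{−λ_l λ_{l+1}} Λ_λ (where λ_l λ_{l+1} is computed via natural-number representatives). Then y_l is a unit of k[A] whose multiplicative order is exactly 2n, i.e. y_l^{2n} = 1 and y_l^c ≠ 1 for every 0 < c < 2n. -/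
open Finset

section chi

set_option linter.unusedSectionVars false

variable {k : Type*} [Field k] {n : ℕ} [NeZero n] {q : k}

lemma pow_val_add (hq1 : q ^ n = 1) (a b : ZMod n) :
    q ^ (a + b).val = q ^ a.val * q ^ b.val := by
  rw [ZMod.val_add, ← pow_add]
  exact (pow_eq_pow_mod _ hq1).symm

lemma pow_val_mul (hq1 : q ^ n = 1) (a b : ZMod n) :
    q ^ (a * b).val = (q ^ a.val) ^ b.val := by
  rw [ZMod.val_mul, ← pow_mul]
  exact (pow_eq_pow_mod _ hq1).symm

lemma pow_val_sum (hq1 : q ^ n = 1) {ι : Type*} (s : Finset ι) (f : ι → ZMod n) :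
    q ^ (∑ j ∈ s, f j).val = ∏ j ∈ s, q ^ (f j).val := by
  classical
  induction s using Finset.induction_on with
  | empty => simp
  | insert _ _ h ih => rw [Finset.sum_insert h, Finset.prod_insert h, pow_val_add hq1, ih]

variable {m : ℕ}

/-- The character value `q ^ (λ·i).val`. -/
def chi (q : k) (lam i : Fin m → ZMod n) : k :=
  q ^ (∑ j, lam j * i j : ZMod n).val

lemma chi_comm (lam i : Fin m → ZMod n) : chi q lam i = chi q i lam := by
  unfold chi
  rw [Finset.sum_congr rfl fun j _ => mul_comm (lam j) (i j)]

lemma chi_zero_right (lam : Fin m → ZMod n) : chi q lam 0 = 1 := by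
  simp [chi]

lemma chi_add_right (hq1 : q ^ n = 1) (lam i i' : Fin m → ZMod n) :
    chi q lam (i + i') = chi q lam i * chi q lam i' := by
  unfold chi
  have h : (∑ j, lam j * (i + i') j) = (∑ j, lam j * i j) + ∑ j, lam j * i' j := by
    rw [← Finset.sum_add_distrib]
    exact Finset.sum_congr rfl fun j _ => by simp [mul_add]
  rw [h, pow_val_add hq1]

lemma chi_add_left (hq1 : q ^ n = 1) (lam lam' i : Fin m → ZMod n) :
    chi q (lam + lam') i = chi q lam i * chi q lam' i := by
  rw [chi_comm, chi_add_right hq1, chi_comm i lam, chi_comm i lam']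

lemma sum_chi_single (hq : IsPrimitiveRoot q n) (c : ZMod n) :
    ∑ t : ZMod n, q ^ (c * t).val = if c = 0 then (n : k) else 0 := by
  have hq1 : q ^ n = 1 := hq.pow_eq_one
  split_ifs with h
  · subst h
    simp [ZMod.card]
  · have hw : q ^ c.val ≠ 1 :=
      hq.pow_ne_one_of_pos_of_lt (ZMod.val_pos.mpr h).ne' (ZMod.val_lt c)
    have h1 : ∑ t : ZMod n, q ^ (c * t).val = ∑ t ∈ Finset.range n, (q ^ c.val) ^ t := by
      rw [Finset.sum_congr rfl fun t _ => pow_val_mul hq1 c t]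
      exact Finset.sum_nbij' (fun t => t.val) (fun t => (t : ZMod n))
        (fun a _ => Finset.mem_range.mpr (ZMod.val_lt a)) (fun a _ => Finset.mem_univ _)
        (fun a _ => ZMod.natCast_rightInverse a)
        (fun a ha => ZMod.val_cast_of_lt (Finset.mem_range.mp ha))
        (fun a _ => rfl)
    have h2 := geom_sum_mul (q ^ c.val) n
    rw [← pow_mul, mul_comm c.val n, pow_mul, hq1, one_pow, sub_self] at h2
    rcases mul_eq_zero.mp h2 with h3 | h3
    · rw [h1, h3]
    · exact absurd (sub_eq_zero.mp h3) hw

lemma sum_chi (hq : IsPrimitiveRoot q n) (lam : Fin m → ZMod n) :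
    ∑ i : Fin m → ZMod n, chi q lam i = if lam = 0 then ((n : k)) ^ m else 0 := by
  have hq1 : q ^ n = 1 := hq.pow_eq_one
  have h1 : ∑ i : Fin m → ZMod n, chi q lam i
      = ∑ i : Fin m → ZMod n, ∏ j, q ^ (lam j * i j).val :=
    Finset.sum_congr rfl fun i _ => pow_val_sum hq1 _ _
  rw [h1, ← Fintype.prod_sum (fun j t => q ^ ((lam j * t : ZMod n)).val)]
  simp_rw [sum_chi_single hq]
  split_ifs with h
  · subst h; simp
  · obtain ⟨j, hj⟩ := Function.ne_iff.mp h
    refine Finset.prod_eq_zero (Finset.mem_univ j) ?_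
    rw [if_neg (by simpa using hj)]

end chi

/-- The idempotent `Λ_λ = n^{−m} ∑_{i ∈ A} q^{λ·i} x^i` in the group algebra of
`A = (Fin m → ZMod n)`. -/
noncomputable def Lam {k : Type*} [Field k] (n m : ℕ) [NeZero n] (q : k)
    (lam : Fin m → ZMod n) : MonoidAlgebra k (Multiplicative (Fin m → ZMod n)) :=
  ((n : k) ^ m)⁻¹ • ∑ i : Fin m → ZMod n,
    q ^ (∑ j, lam j * i j : ZMod n).val •
      MonoidAlgebra.of k (Multiplicative (Fin m → ZMod n)) (Multiplicative.ofAdd i)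

/-- The element `y_l = ∑_{λ ∈ A} ζ^{−λ_l λ_{l+1}} Λ_λ`, where the exponent
`λ_l λ_{l+1}` is computed via natural-number representatives. -/
noncomputable def yElt {k : Type*} [Field k] (n m : ℕ) [NeZero n] (ζ : k)
    (l : Fin m) (hl : (l : ℕ) + 1 < m) :
    MonoidAlgebra k (Multiplicative (Fin m → ZMod n)) :=
  ∑ lam : Fin m → ZMod n,
    (ζ⁻¹) ^ ((lam l).val * (lam ⟨(l : ℕ) + 1, hl⟩).val) • Lam n m (ζ ^ 2) lam


section lam

set_option linter.unusedSectionVars false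

variable {k : Type*} [Field k] {n m : ℕ} [NeZero n] {q : k}

local notation "A" => (Fin m → ZMod n)
local notation "X" => fun i => MonoidAlgebra.of k (Multiplicative (Fin m → ZMod n)) (Multiplicative.ofAdd i)

noncomputable def Lam' (q : k) (lam : Fin m → ZMod n) :
    MonoidAlgebra k (Multiplicative (Fin m → ZMod n)) :=
  ∑ i : Fin m → ZMod n, chi q lam i • X i

lemma X_mul (i i' : Fin m → ZMod n) : (X i) * (X i') = X (i + i') := by
  rw [← map_mul]
  rfl

lemma Lam'_mul_Lam' (hq : IsPrimitiveRoot q n) (lam mu : Fin m → ZMod n) :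
    Lam' q lam * Lam' q mu
      = (if lam = mu then ((n : k)) ^ m else 0) • Lam' q mu := by
  have hq1 : q ^ n = 1 := hq.pow_eq_one
  have hchi_ne : ∀ (a i : Fin m → ZMod n), chi q a i ≠ 0 := fun a i =>
    pow_ne_zero _ (hq.ne_zero (NeZero.ne n))
  unfold Lam'
  rw [Finset.sum_mul_sum]
  calc
    ∑ i : A, ∑ i' : A, (chi q lam i • X i) * (chi q mu i' • X i')
        = ∑ i : A, ∑ i' : A, (chi q lam i * chi q mu i') • X (i + i') := by
          refine Finset.sum_congr rfl fun i _ => Finset.sum_congr rfl fun i' _ => ?_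
          rw [smul_mul_smul_comm, X_mul]
    _ = ∑ i : A, ∑ s : A, (chi q lam i * chi q mu (s - i)) • X s := by
          refine Finset.sum_congr rfl fun i _ => ?_
          exact (Fintype.sum_equiv (Equiv.subRight i)
            (fun s => (chi q lam i * chi q mu (s - i)) • X s)
            (fun i' => (chi q lam i * chi q mu i') • X (i + i'))
            (fun s => by
              simp only [Equiv.subRight_apply]
              rw [show i + (s - i) = s from by abel])).symm
    _ = ∑ s : A, (∑ i : A, chi q lam i * chi q mu (s - i)) • X s := by
          rw [Finset.sum_comm]
          exact Finset.sum_congr rfl fun s _ => (Finset.sum_smul).symm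
    _ = ∑ s : A, ((if lam = mu then ((n : k)) ^ m else 0) * chi q mu s) • X s := by
          refine Finset.sum_congr rfl fun s _ => ?_
          congr 1
          have h1 : ∀ i : A, chi q lam i * chi q mu (s - i)
              = chi q (lam - mu) i * chi q mu s := by
            intro i
            have h2 : chi q mu (s - i) * chi q mu i = chi q mu s := by
              rw [← chi_add_right hq1, sub_add_cancel]
            have h3 : chi q (lam - mu) i * chi q mu i = chi q lam i := by
              rw [← chi_add_left hq1, sub_add_cancel]
            rw [← h3, mul_assoc, mul_comm (chi q mu i), h2]
          rw [Finset.sum_congr rfl fun i _ => h1 i, ← Finset.sum_mul, sum_chi hq]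
          simp only [sub_eq_zero]
    _ = (if lam = mu then ((n : k)) ^ m else 0) • ∑ s : A, chi q mu s • X s := by
          rw [Finset.smul_sum]
          exact Finset.sum_congr rfl fun s _ => (smul_smul _ _ _).symm
end lam

section lam2

set_option linter.unusedSectionVars false

variable {k : Type*} [Field k] {n m : ℕ} [NeZero n] {q : k}

local notation "A" => (Fin m → ZMod n)
local notation "X" => fun i => MonoidAlgebra.of k (Multiplicative (Fin m → ZMod n)) (Multiplicative.ofAdd i)

lemma Lam_eq_Lam' (q : k) (lam : Fin m → ZMod n) :
    Lam n m q lam = (((n : k)) ^ m)⁻¹ • Lam' q lam := rfl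

lemma Lam_mul_Lam (hq : IsPrimitiveRoot q n) (hnk : (n : k) ≠ 0) (lam mu : Fin m → ZMod n) :
    Lam n m q lam * Lam n m q mu = if lam = mu then Lam n m q lam else 0 := by
  have hp : ((n : k)) ^ m ≠ 0 := pow_ne_zero _ hnk
  rw [Lam_eq_Lam', Lam_eq_Lam', smul_mul_assoc, mul_smul_comm, Lam'_mul_Lam' hq,
    smul_smul, smul_smul]
  split_ifs with h
  · subst h
    congr 1
    rw [mul_assoc, inv_mul_cancel₀ hp, mul_one]
  · simp

lemma sum_Lam (hq : IsPrimitiveRoot q n) (hnk : (n : k) ≠ 0) :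
    ∑ lam : Fin m → ZMod n, Lam n m q lam = 1 := by
  have hp : ((n : k)) ^ m ≠ 0 := pow_ne_zero _ hnk
  calc
    ∑ lam : A, Lam n m q lam = (((n : k)) ^ m)⁻¹ • ∑ lam : A, Lam' q lam := by
        simp_rw [Lam_eq_Lam']
        rw [Finset.smul_sum]
    _ = (((n : k)) ^ m)⁻¹ • ∑ i : A, (∑ lam : A, chi q lam i) • X i := by
        unfold Lam'
        rw [Finset.sum_comm]
        congr 1
        exact Finset.sum_congr rfl fun i _ => Finset.sum_smul.symm
    _ = (((n : k)) ^ m)⁻¹ • ∑ i : A, (if i = 0 then ((n : k)) ^ m else 0) • X i := by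
        congr 1
        refine Finset.sum_congr rfl fun i _ => ?_
        rw [Finset.sum_congr rfl fun lam _ => chi_comm lam i, sum_chi hq]
    _ = 1 := by
        have h2 : ∀ i : Fin m → ZMod n, (if i = 0 then ((n : k)) ^ m else 0) • X i
            = if i = 0 then ((n : k)) ^ m • X i else 0 := fun i => by split_ifs <;> simp
        rw [Finset.sum_congr rfl fun i _ => h2 i,
          Finset.sum_ite_eq' Finset.univ (0 : Fin m → ZMod n) (fun i => ((n : k)) ^ m • X i)]
        simp only [Finset.mem_univ, if_true]
        rw [smul_smul, inv_mul_cancel₀ hp]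
        simp [MonoidAlgebra.one_def]

lemma diag_mul (hq : IsPrimitiveRoot q n) (hnk : (n : k) ≠ 0) (c d : (Fin m → ZMod n) → k) :
    (∑ lam : A, c lam • Lam n m q lam) * (∑ lam : A, d lam • Lam n m q lam)
      = ∑ lam : A, (c lam * d lam) • Lam n m q lam := by
  rw [Finset.sum_mul_sum]
  have h1 : ∀ lam mu : Fin m → ZMod n,
      (c lam • Lam n m q lam) * (d mu • Lam n m q mu)
        = if lam = mu then (c lam * d mu) • Lam n m q lam else 0 := by
    intro lam mu
    rw [smul_mul_smul_comm, Lam_mul_Lam hq hnk]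
    split_ifs with h <;> simp
  rw [Finset.sum_congr rfl fun lam _ => Finset.sum_congr rfl fun mu _ => h1 lam mu]
  refine Finset.sum_congr rfl fun lam _ => ?_
  rw [Finset.sum_ite_eq Finset.univ lam (fun mu => (c lam * d mu) • Lam n m q lam)]
  simp

lemma diag_pow (hq : IsPrimitiveRoot q n) (hnk : (n : k) ≠ 0) (c : (Fin m → ZMod n) → k)
    (N : ℕ) :
    (∑ lam : A, c lam • Lam n m q lam) ^ N = ∑ lam : A, (c lam) ^ N • Lam n m q lam := by
  induction N with
  | zero => simpa using (sum_Lam hq hnk).symm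
  | succ N ih =>
      rw [pow_succ, ih, diag_mul hq hnk]
      exact Finset.sum_congr rfl fun lam _ => by rw [← pow_succ]

lemma Lam_ne_zero (hnk : (n : k) ≠ 0) (q : k) (lam : Fin m → ZMod n) :
    Lam n m q lam ≠ 0 := by
  intro h0
  have h1 := congrArg (fun f : MonoidAlgebra k (Multiplicative (Fin m → ZMod n)) =>
    f.coeff (1 : Multiplicative (Fin m → ZMod n))) h0
  have hp : ((n : k)) ^ m ≠ 0 := pow_ne_zero _ hnk
  simp only [Lam, MonoidAlgebra.of_apply] at h1
  rw [MonoidAlgebra.coeff_smul, Finsupp.smul_apply, MonoidAlgebra.coeff_sum, Finsupp.finset_sum_apply] at h1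
  simp only [MonoidAlgebra.smul_single', mul_one, MonoidAlgebra.coeff_single_apply,
    MonoidAlgebra.coeff_zero, Finsupp.coe_zero, Pi.zero_apply] at h1
  have h2 : ∀ x : Fin m → ZMod n, (Multiplicative.ofAdd x = 1) = (x = 0) := fun x => by
    rw [eq_iff_iff]
    constructor
    · intro h; simpa using h
    · intro h; simp [h]
  simp only [h2] at h1
  rw [Finset.sum_ite_eq' Finset.univ (0 : Fin m → ZMod n)
    (fun x => q ^ (∑ j, lam j * x j : ZMod n).val)] at h1
  simp only [Finset.mem_univ, if_true, Pi.zero_apply, mul_zero, Finset.sum_const_zero,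
    ZMod.val_zero, pow_zero, smul_eq_mul, mul_one] at h1
  exact hp (by simpa [inv_eq_zero] using h1)

end lam2

/-- For a primitive `2n`-th root of unity `ζ` and `q = ζ²`, the element
`y_l` is a unit of `k[A]` of multiplicative order exactly `2n`. -/
theorem yElt_order {k : Type*} [Field k] [IsAlgClosed k] [CharZero k]
    (n m : ℕ) (hn : 2 ≤ n) (hm : 2 ≤ m) (ζ : k) (hζ : IsPrimitiveRoot ζ (2 * n)) :
    haveI : NeZero n := ⟨by omega⟩
    ∀ (l : Fin m) (hl : (l : ℕ) + 1 < m),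
      IsUnit (yElt n m ζ l hl) ∧
      yElt n m ζ l hl ^ (2 * n) = 1 ∧
      ∀ c : ℕ, 0 < c → c < 2 * n → yElt n m ζ l hl ^ c ≠ 1 := by
  haveI : NeZero n := ⟨by omega⟩
  intro l hl
  set l' : Fin m := ⟨(l : ℕ) + 1, hl⟩ with hl'
  have hq : IsPrimitiveRoot (ζ ^ 2) n := by
    have h := hζ.pow_of_dvd (p := 2) two_ne_zero ⟨n, rfl⟩
    simpa [Nat.mul_div_cancel_left] using h
  have hnk : (n : k) ≠ 0 := Nat.cast_ne_zero.mpr (by omega)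
  set c : (Fin m → ZMod n) → k := fun lam => (ζ⁻¹) ^ ((lam l).val * (lam l').val) with hc
  have hy : yElt n m ζ l hl = ∑ lam : Fin m → ZMod n, c lam • Lam n m (ζ ^ 2) lam := rfl
  have hpow : ∀ N, yElt n m ζ l hl ^ N
      = ∑ lam : Fin m → ZMod n, (c lam) ^ N • Lam n m (ζ ^ 2) lam := fun N => by
    rw [hy, diag_pow hq hnk]
  have h2n : yElt n m ζ l hl ^ (2 * n) = 1 := by
    rw [hpow]
    have h1 : ∀ lam : Fin m → ZMod n, (c lam) ^ (2 * n) = 1 := fun lam => by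
      rw [hc]
      calc ((ζ⁻¹) ^ ((lam l).val * (lam l').val)) ^ (2 * n)
          = ((ζ⁻¹) ^ (2 * n)) ^ ((lam l).val * (lam l').val) := by
            rw [← pow_mul, ← pow_mul, mul_comm]
        _ = 1 := by rw [inv_pow, hζ.pow_eq_one, inv_one, one_pow]
    rw [Finset.sum_congr rfl fun lam _ => by rw [h1 lam, one_smul]]
    exact sum_Lam hq hnk
  refine ⟨?_, h2n, ?_⟩
  · refine IsUnit.of_mul_eq_one (yElt n m ζ l hl ^ (2 * n - 1)) ?_
    rw [← pow_succ', show 2 * n - 1 + 1 = 2 * n from by omega, h2n]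
  · intro cc hc0 hclt hyc
    haveI : Fact (1 < n) := ⟨by omega⟩
    set lam0 : Fin m → ZMod n := fun j => if j = l then 1 else if j = l' then 1 else 0
      with hlam0
    have hll' : l' ≠ l := by
      intro h
      have := congrArg Fin.val h
      simp [hl'] at this
    have h0l : lam0 l = 1 := by simp [hlam0]
    have h0l' : lam0 l' = 1 := by simp [hlam0, hll']
    have hval : c lam0 = ζ⁻¹ := by
      rw [hc]
      simp only [h0l, h0l', ZMod.val_one, mul_one, pow_one]
    have hind : Lam n m (ζ ^ 2) lam0
        = ∑ lam : Fin m → ZMod n, (if lam = lam0 then (1 : k) else 0) • Lam n m (ζ ^ 2) lam := by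
      have h3 : ∀ lam : Fin m → ZMod n,
          (if lam = lam0 then (1 : k) else 0) • Lam n m (ζ ^ 2) lam
            = if lam = lam0 then Lam n m (ζ ^ 2) lam else 0 := fun lam => by
        split_ifs <;> simp
      rw [Finset.sum_congr rfl fun lam _ => h3 lam,
        Finset.sum_ite_eq' Finset.univ lam0 (fun lam => Lam n m (ζ ^ 2) lam)]
      simp
    have key := diag_mul hq hnk (fun lam => (c lam) ^ cc)
      (fun lam => if lam = lam0 then (1 : k) else 0)
    rw [← hpow cc, ← hind, hyc, one_mul] at key
    have hr : ∑ lam : Fin m → ZMod n,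
        ((c lam) ^ cc * (if lam = lam0 then (1 : k) else 0)) • Lam n m (ζ ^ 2) lam
          = (c lam0) ^ cc • Lam n m (ζ ^ 2) lam0 := by
      have h4 : ∀ lam : Fin m → ZMod n,
          ((c lam) ^ cc * (if lam = lam0 then (1 : k) else 0)) • Lam n m (ζ ^ 2) lam
            = if lam = lam0 then (c lam0) ^ cc • Lam n m (ζ ^ 2) lam0 else 0 := fun lam => by
        split_ifs with h <;> simp [h]
      rw [Finset.sum_congr rfl fun lam _ => h4 lam,
        Finset.sum_ite_eq' Finset.univ lam0
          (fun _ => (c lam0) ^ cc • Lam n m (ζ ^ 2) lam0)]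
      simp
    rw [hr] at key
    have h5 : ((c lam0) ^ cc - 1) • Lam n m (ζ ^ 2) lam0 = 0 := by
      rw [sub_smul, one_smul, ← key, sub_self]
    rcases smul_eq_zero.mp h5 with h | h
    · have h6 : (c lam0) ^ cc = 1 := by rwa [sub_eq_zero] at h
      rw [hval, inv_pow, inv_eq_one] at h6
      exact hζ.pow_ne_one_of_pos_of_lt hc0.ne' hclt h6
    · exact Lam_ne_zero hnk _ _ h
end
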